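/- arXiv:2309.09503 — 5 statements merged into one kernel-verified Lean document; each statement's English description precedes it below -/
import Mathlib

section
/- Let L be an anticommutative algebra satisfying [[a,b],[c,d]] = [a,[[d,b],c]] + [d,[[b,c],a]] + [b,[[c,a],d]] + [c,[[a,d],b]] and [[[a,d],c],b] = [[[a,d],b],c] + [[[a,b],d],c] - [[[a,b],c],d]. Let J(a,b,c) = [[a,b],c] + [[b,c],a] + [[c,a],b]. Then [[J(a,b,c),d],e] = 0 for all a,b,c,d,e. -/
set_option maxHeartbeats 4000000 in
/-- An anticommutative algebra (bracket written as multiplication) over a field of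
characteristic 0 satisfying identities (c1) and (c2) also satisfies (c4):
the Jacobian J(a,b,c) = ((ab)c) + ((bc)a) + ((ca)b) satisfies ((J a b c)*d)*e = 0. -/
theorem c4_of_c1_c2 {K L : Type*} [Field K] [CharZero K]
    [NonUnitalNonAssocRing L] [Module K L] [SMulCommClass K L L] [IsScalarTower K L L]
    (anti : ∀ a : L, a * a = 0)
    (c1 : ∀ a b c d : L, (a*b)*(c*d) = a*((d*b)*c) + d*((b*c)*a) + b*((c*a)*d) + c*((a*d)*b))
    (c2 : ∀ a b c d : L, ((a*d)*c)*b = ((a*d)*b)*c + ((a*b)*d)*c - ((a*b)*c)*d) :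
    ∀ a b c d e : L,
      (let J := fun x y z : L => (x*y)*z + (y*z)*x + (z*x)*y;
      ((J a b c)*d)*e = 0) := by
  have mcomm : ∀ x y : L, x * y = -(y * x) := by
    intro x y
    refine eq_neg_of_add_eq_zero_left ?_
    have h := anti (x + y)
    rw [mul_add, add_mul, add_mul, anti x, anti y, zero_add, add_zero] at h
    rw [add_comm]; exact h
  intro a b c d e
  dsimp only
  have sw_o : ∀ x y : L, (x * y) = -(y * x) := mcomm
  have sw_l : ∀ x y z1 : L, ((x * y) * z1) = -((y * x) * z1) := by
    intro x y z1; rw [mcomm x y]; simp only [neg_mul, mul_neg]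
  have sw_ll : ∀ x y z1 z2 : L, (((x * y) * z2) * z1) = -(((y * x) * z2) * z1) := by
    intro x y z1 z2; rw [mcomm x y]; simp only [neg_mul, mul_neg]
  have sw_lll : ∀ x y z1 z2 z3 : L, ((((x * y) * z3) * z2) * z1) = -((((y * x) * z3) * z2) * z1) := by
    intro x y z1 z2 z3; rw [mcomm x y]; simp only [neg_mul, mul_neg]
  have sw_lr : ∀ x y z1 z2 : L, ((z2 * (x * y)) * z1) = -((z2 * (y * x)) * z1) := by
    intro x y z1 z2; rw [mcomm x y]; simp only [neg_mul, mul_neg]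
  have sw_lrl : ∀ x y z1 z2 z3 : L, ((z2 * ((x * y) * z3)) * z1) = -((z2 * ((y * x) * z3)) * z1) := by
    intro x y z1 z2 z3; rw [mcomm x y]; simp only [neg_mul, mul_neg]
  have sw_r : ∀ x y z1 : L, (z1 * (x * y)) = -(z1 * (y * x)) := by
    intro x y z1; rw [mcomm x y]; simp only [neg_mul, mul_neg]
  have sw_rl : ∀ x y z1 z2 : L, (z1 * ((x * y) * z2)) = -(z1 * ((y * x) * z2)) := by
    intro x y z1 z2; rw [mcomm x y]; simp only [neg_mul, mul_neg]
  have s1 : ((a * b) * c) * (d * e) - ((a * b) * ((e * c) * d) + e * ((c * d) * (a * b)) + c * ((d * (a * b)) * e) + d * (((a * b) * e) * c)) = 0 := sub_eq_zero_of_eq (c1 (a * b) c d e)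
  have s2 : ((a * b) * c) * (e * d) - ((a * b) * ((d * c) * e) + d * ((c * e) * (a * b)) + c * ((e * (a * b)) * d) + e * (((a * b) * d) * c)) = 0 := sub_eq_zero_of_eq (c1 (a * b) c e d)
  have s3 : ((a * b) * d) * (c * e) - ((a * b) * ((e * d) * c) + e * ((d * c) * (a * b)) + d * ((c * (a * b)) * e) + c * (((a * b) * e) * d)) = 0 := sub_eq_zero_of_eq (c1 (a * b) d c e)
  have s4 : ((a * b) * d) * (e * c) - ((a * b) * ((c * d) * e) + c * ((d * e) * (a * b)) + d * ((e * (a * b)) * c) + e * (((a * b) * c) * d)) = 0 := sub_eq_zero_of_eq (c1 (a * b) d e c)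
  have s5 : ((a * b) * e) * (c * d) - ((a * b) * ((d * e) * c) + d * ((e * c) * (a * b)) + e * ((c * (a * b)) * d) + c * (((a * b) * d) * e)) = 0 := sub_eq_zero_of_eq (c1 (a * b) e c d)
  have s6 : ((a * c) * b) * (d * e) - ((a * c) * ((e * b) * d) + e * ((b * d) * (a * c)) + b * ((d * (a * c)) * e) + d * (((a * c) * e) * b)) = 0 := sub_eq_zero_of_eq (c1 (a * c) b d e)
  have s7 : ((a * c) * b) * (e * d) - ((a * c) * ((d * b) * e) + d * ((b * e) * (a * c)) + b * ((e * (a * c)) * d) + e * (((a * c) * d) * b)) = 0 := sub_eq_zero_of_eq (c1 (a * c) b e d)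
  have s8 : ((a * c) * d) * (b * e) - ((a * c) * ((e * d) * b) + e * ((d * b) * (a * c)) + d * ((b * (a * c)) * e) + b * (((a * c) * e) * d)) = 0 := sub_eq_zero_of_eq (c1 (a * c) d b e)
  have s9 : ((a * c) * d) * (e * b) - ((a * c) * ((b * d) * e) + b * ((d * e) * (a * c)) + d * ((e * (a * c)) * b) + e * (((a * c) * b) * d)) = 0 := sub_eq_zero_of_eq (c1 (a * c) d e b)
  have s10 : ((a * c) * e) * (b * d) - ((a * c) * ((d * e) * b) + d * ((e * b) * (a * c)) + e * ((b * (a * c)) * d) + b * (((a * c) * d) * e)) = 0 := sub_eq_zero_of_eq (c1 (a * c) e b d)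
  have s11 : ((a * d) * b) * (c * e) - ((a * d) * ((e * b) * c) + e * ((b * c) * (a * d)) + b * ((c * (a * d)) * e) + c * (((a * d) * e) * b)) = 0 := sub_eq_zero_of_eq (c1 (a * d) b c e)
  have s12 : ((a * d) * b) * (e * c) - ((a * d) * ((c * b) * e) + c * ((b * e) * (a * d)) + b * ((e * (a * d)) * c) + e * (((a * d) * c) * b)) = 0 := sub_eq_zero_of_eq (c1 (a * d) b e c)
  have s13 : ((a * d) * c) * (b * e) - ((a * d) * ((e * c) * b) + e * ((c * b) * (a * d)) + c * ((b * (a * d)) * e) + b * (((a * d) * e) * c)) = 0 := sub_eq_zero_of_eq (c1 (a * d) c b e)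
  have s14 : ((a * d) * c) * (e * b) - ((a * d) * ((b * c) * e) + b * ((c * e) * (a * d)) + c * ((e * (a * d)) * b) + e * (((a * d) * b) * c)) = 0 := sub_eq_zero_of_eq (c1 (a * d) c e b)
  have s15 : ((a * d) * e) * (b * c) - ((a * d) * ((c * e) * b) + c * ((e * b) * (a * d)) + e * ((b * (a * d)) * c) + b * (((a * d) * c) * e)) = 0 := sub_eq_zero_of_eq (c1 (a * d) e b c)
  have s16 : ((a * e) * b) * (c * d) - ((a * e) * ((d * b) * c) + d * ((b * c) * (a * e)) + b * ((c * (a * e)) * d) + c * (((a * e) * d) * b)) = 0 := sub_eq_zero_of_eq (c1 (a * e) b c d)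
  have s17 : ((a * e) * b) * (d * c) - ((a * e) * ((c * b) * d) + c * ((b * d) * (a * e)) + b * ((d * (a * e)) * c) + d * (((a * e) * c) * b)) = 0 := sub_eq_zero_of_eq (c1 (a * e) b d c)
  have s18 : ((a * e) * c) * (d * b) - ((a * e) * ((b * c) * d) + b * ((c * d) * (a * e)) + c * ((d * (a * e)) * b) + d * (((a * e) * b) * c)) = 0 := sub_eq_zero_of_eq (c1 (a * e) c d b)
  have s19 : ((a * e) * d) * (b * c) - ((a * e) * ((c * d) * b) + c * ((d * b) * (a * e)) + d * ((b * (a * e)) * c) + b * (((a * e) * c) * d)) = 0 := sub_eq_zero_of_eq (c1 (a * e) d b c)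
  have s20 : ((b * c) * a) * (d * e) - ((b * c) * ((e * a) * d) + e * ((a * d) * (b * c)) + a * ((d * (b * c)) * e) + d * (((b * c) * e) * a)) = 0 := sub_eq_zero_of_eq (c1 (b * c) a d e)
  have s21 : ((b * c) * a) * (e * d) - ((b * c) * ((d * a) * e) + d * ((a * e) * (b * c)) + a * ((e * (b * c)) * d) + e * (((b * c) * d) * a)) = 0 := sub_eq_zero_of_eq (c1 (b * c) a e d)
  have s22 : ((b * c) * d) * (a * e) - ((b * c) * ((e * d) * a) + e * ((d * a) * (b * c)) + d * ((a * (b * c)) * e) + a * (((b * c) * e) * d)) = 0 := sub_eq_zero_of_eq (c1 (b * c) d a e)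
  have s23 : ((b * c) * d) * (e * a) - ((b * c) * ((a * d) * e) + a * ((d * e) * (b * c)) + d * ((e * (b * c)) * a) + e * (((b * c) * a) * d)) = 0 := sub_eq_zero_of_eq (c1 (b * c) d e a)
  have s24 : ((b * c) * e) * (a * d) - ((b * c) * ((d * e) * a) + d * ((e * a) * (b * c)) + e * ((a * (b * c)) * d) + a * (((b * c) * d) * e)) = 0 := sub_eq_zero_of_eq (c1 (b * c) e a d)
  have s25 : ((b * d) * a) * (c * e) - ((b * d) * ((e * a) * c) + e * ((a * c) * (b * d)) + a * ((c * (b * d)) * e) + c * (((b * d) * e) * a)) = 0 := sub_eq_zero_of_eq (c1 (b * d) a c e)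
  have s26 : ((b * d) * a) * (e * c) - ((b * d) * ((c * a) * e) + c * ((a * e) * (b * d)) + a * ((e * (b * d)) * c) + e * (((b * d) * c) * a)) = 0 := sub_eq_zero_of_eq (c1 (b * d) a e c)
  have s27 : ((b * d) * c) * (e * a) - ((b * d) * ((a * c) * e) + a * ((c * e) * (b * d)) + c * ((e * (b * d)) * a) + e * (((b * d) * a) * c)) = 0 := sub_eq_zero_of_eq (c1 (b * d) c e a)
  have s28 : ((b * d) * e) * (a * c) - ((b * d) * ((c * e) * a) + c * ((e * a) * (b * d)) + e * ((a * (b * d)) * c) + a * (((b * d) * c) * e)) = 0 := sub_eq_zero_of_eq (c1 (b * d) e a c)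
  have s29 : ((b * e) * a) * (c * d) - ((b * e) * ((d * a) * c) + d * ((a * c) * (b * e)) + a * ((c * (b * e)) * d) + c * (((b * e) * d) * a)) = 0 := sub_eq_zero_of_eq (c1 (b * e) a c d)
  have s30 : ((b * e) * a) * (d * c) - ((b * e) * ((c * a) * d) + c * ((a * d) * (b * e)) + a * ((d * (b * e)) * c) + d * (((b * e) * c) * a)) = 0 := sub_eq_zero_of_eq (c1 (b * e) a d c)
  have s31 : ((b * e) * c) * (a * d) - ((b * e) * ((d * c) * a) + d * ((c * a) * (b * e)) + c * ((a * (b * e)) * d) + a * (((b * e) * d) * c)) = 0 := sub_eq_zero_of_eq (c1 (b * e) c a d)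
  have s32 : ((b * e) * c) * (d * a) - ((b * e) * ((a * c) * d) + a * ((c * d) * (b * e)) + c * ((d * (b * e)) * a) + d * (((b * e) * a) * c)) = 0 := sub_eq_zero_of_eq (c1 (b * e) c d a)
  have s33 : ((b * e) * d) * (a * c) - ((b * e) * ((c * d) * a) + c * ((d * a) * (b * e)) + d * ((a * (b * e)) * c) + a * (((b * e) * c) * d)) = 0 := sub_eq_zero_of_eq (c1 (b * e) d a c)
  have s34 : ((c * d) * a) * (e * b) - ((c * d) * ((b * a) * e) + b * ((a * e) * (c * d)) + a * ((e * (c * d)) * b) + e * (((c * d) * b) * a)) = 0 := sub_eq_zero_of_eq (c1 (c * d) a e b)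
  have s35 : ((c * d) * b) * (a * e) - ((c * d) * ((e * b) * a) + e * ((b * a) * (c * d)) + b * ((a * (c * d)) * e) + a * (((c * d) * e) * b)) = 0 := sub_eq_zero_of_eq (c1 (c * d) b a e)
  have s36 : ((c * d) * b) * (e * a) - ((c * d) * ((a * b) * e) + a * ((b * e) * (c * d)) + b * ((e * (c * d)) * a) + e * (((c * d) * a) * b)) = 0 := sub_eq_zero_of_eq (c1 (c * d) b e a)
  have s37 : ((c * d) * e) * (a * b) - ((c * d) * ((b * e) * a) + b * ((e * a) * (c * d)) + e * ((a * (c * d)) * b) + a * (((c * d) * b) * e)) = 0 := sub_eq_zero_of_eq (c1 (c * d) e a b)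
  have s38 : ((c * e) * a) * (b * d) - ((c * e) * ((d * a) * b) + d * ((a * b) * (c * e)) + a * ((b * (c * e)) * d) + b * (((c * e) * d) * a)) = 0 := sub_eq_zero_of_eq (c1 (c * e) a b d)
  have s39 : ((c * e) * a) * (d * b) - ((c * e) * ((b * a) * d) + b * ((a * d) * (c * e)) + a * ((d * (c * e)) * b) + d * (((c * e) * b) * a)) = 0 := sub_eq_zero_of_eq (c1 (c * e) a d b)
  have s40 : ((c * e) * b) * (a * d) - ((c * e) * ((d * b) * a) + d * ((b * a) * (c * e)) + b * ((a * (c * e)) * d) + a * (((c * e) * d) * b)) = 0 := sub_eq_zero_of_eq (c1 (c * e) b a d)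
  have s41 : ((c * e) * b) * (d * a) - ((c * e) * ((a * b) * d) + a * ((b * d) * (c * e)) + b * ((d * (c * e)) * a) + d * (((c * e) * a) * b)) = 0 := sub_eq_zero_of_eq (c1 (c * e) b d a)
  have s42 : ((d * e) * a) * (b * c) - ((d * e) * ((c * a) * b) + c * ((a * b) * (d * e)) + a * ((b * (d * e)) * c) + b * (((d * e) * c) * a)) = 0 := sub_eq_zero_of_eq (c1 (d * e) a b c)
  have s43 : ((d * e) * a) * (c * b) - ((d * e) * ((b * a) * c) + b * ((a * c) * (d * e)) + a * ((c * (d * e)) * b) + c * (((d * e) * b) * a)) = 0 := sub_eq_zero_of_eq (c1 (d * e) a c b)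
  have s44 : ((d * e) * b) * (a * c) - ((d * e) * ((c * b) * a) + c * ((b * a) * (d * e)) + b * ((a * (d * e)) * c) + a * (((d * e) * c) * b)) = 0 := sub_eq_zero_of_eq (c1 (d * e) b a c)
  have s45 : ((d * e) * b) * (c * a) - ((d * e) * ((a * b) * c) + a * ((b * c) * (d * e)) + b * ((c * (d * e)) * a) + c * (((d * e) * a) * b)) = 0 := sub_eq_zero_of_eq (c1 (d * e) b c a)
  have s46 : ((d * e) * c) * (a * b) - ((d * e) * ((b * c) * a) + b * ((c * a) * (d * e)) + c * ((a * (d * e)) * b) + a * (((d * e) * b) * c)) = 0 := sub_eq_zero_of_eq (c1 (d * e) c a b)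
  have s47 : ((a * b) * (c * d)) * e - ((a * ((d * b) * c)) * e + (d * ((b * c) * a)) * e + (b * ((c * a) * d)) * e + (c * ((a * d) * b)) * e) = 0 := sub_eq_zero_of_eq (by rw [c1 a b c d]; simp only [add_mul])
  have s48 : ((a * b) * (c * e)) * d - ((a * ((e * b) * c)) * d + (e * ((b * c) * a)) * d + (b * ((c * a) * e)) * d + (c * ((a * e) * b)) * d) = 0 := sub_eq_zero_of_eq (by rw [c1 a b c e]; simp only [add_mul])
  have s49 : ((a * b) * (d * c)) * e - ((a * ((c * b) * d)) * e + (c * ((b * d) * a)) * e + (b * ((d * a) * c)) * e + (d * ((a * c) * b)) * e) = 0 := sub_eq_zero_of_eq (by rw [c1 a b d c]; simp only [add_mul])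
  have s50 : ((a * b) * (d * e)) * c - ((a * ((e * b) * d)) * c + (e * ((b * d) * a)) * c + (b * ((d * a) * e)) * c + (d * ((a * e) * b)) * c) = 0 := sub_eq_zero_of_eq (by rw [c1 a b d e]; simp only [add_mul])
  have s51 : ((a * c) * (b * d)) * e - ((a * ((d * c) * b)) * e + (d * ((c * b) * a)) * e + (c * ((b * a) * d)) * e + (b * ((a * d) * c)) * e) = 0 := sub_eq_zero_of_eq (by rw [c1 a c b d]; simp only [add_mul])
  have s52 : ((a * c) * (b * e)) * d - ((a * ((e * c) * b)) * d + (e * ((c * b) * a)) * d + (c * ((b * a) * e)) * d + (b * ((a * e) * c)) * d) = 0 := sub_eq_zero_of_eq (by rw [c1 a c b e]; simp only [add_mul])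
  have s53 : ((a * c) * (d * b)) * e - ((a * ((b * c) * d)) * e + (b * ((c * d) * a)) * e + (c * ((d * a) * b)) * e + (d * ((a * b) * c)) * e) = 0 := sub_eq_zero_of_eq (by rw [c1 a c d b]; simp only [add_mul])
  have s54 : ((a * c) * (d * e)) * b - ((a * ((e * c) * d)) * b + (e * ((c * d) * a)) * b + (c * ((d * a) * e)) * b + (d * ((a * e) * c)) * b) = 0 := sub_eq_zero_of_eq (by rw [c1 a c d e]; simp only [add_mul])
  have s55 : ((a * d) * (b * c)) * e - ((a * ((c * d) * b)) * e + (c * ((d * b) * a)) * e + (d * ((b * a) * c)) * e + (b * ((a * c) * d)) * e) = 0 := sub_eq_zero_of_eq (by rw [c1 a d b c]; simp only [add_mul])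
  have s56 : ((a * d) * (b * e)) * c - ((a * ((e * d) * b)) * c + (e * ((d * b) * a)) * c + (d * ((b * a) * e)) * c + (b * ((a * e) * d)) * c) = 0 := sub_eq_zero_of_eq (by rw [c1 a d b e]; simp only [add_mul])
  have s57 : ((a * d) * (c * e)) * b - ((a * ((e * d) * c)) * b + (e * ((d * c) * a)) * b + (d * ((c * a) * e)) * b + (c * ((a * e) * d)) * b) = 0 := sub_eq_zero_of_eq (by rw [c1 a d c e]; simp only [add_mul])
  have s58 : (((a * b) * e) * d) * c - ((((a * b) * e) * c) * d + (((a * b) * c) * e) * d - (((a * b) * c) * d) * e) = 0 := sub_eq_zero_of_eq (c2 (a * b) c d e)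
  have s59 : (((a * b) * d) * e) * c - ((((a * b) * d) * c) * e + (((a * b) * c) * d) * e - (((a * b) * c) * e) * d) = 0 := sub_eq_zero_of_eq (c2 (a * b) c e d)
  have s60 : (((a * c) * e) * d) * b - ((((a * c) * e) * b) * d + (((a * c) * b) * e) * d - (((a * c) * b) * d) * e) = 0 := sub_eq_zero_of_eq (c2 (a * c) b d e)
  have s61 : (((a * d) * e) * c) * b - ((((a * d) * e) * b) * c + (((a * d) * b) * e) * c - (((a * d) * b) * c) * e) = 0 := sub_eq_zero_of_eq (c2 (a * d) b c e)
  have s62 : (((a * d) * c) * e) * b - ((((a * d) * c) * b) * e + (((a * d) * b) * c) * e - (((a * d) * b) * e) * c) = 0 := sub_eq_zero_of_eq (c2 (a * d) b e c)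
  have s63 : (((a * e) * d) * c) * b - ((((a * e) * d) * b) * c + (((a * e) * b) * d) * c - (((a * e) * b) * c) * d) = 0 := sub_eq_zero_of_eq (c2 (a * e) b c d)
  have s64 : (((a * e) * c) * d) * b - ((((a * e) * c) * b) * d + (((a * e) * b) * c) * d - (((a * e) * b) * d) * c) = 0 := sub_eq_zero_of_eq (c2 (a * e) b d c)
  have s65 : (((b * c) * e) * d) * a - ((((b * c) * e) * a) * d + (((b * c) * a) * e) * d - (((b * c) * a) * d) * e) = 0 := sub_eq_zero_of_eq (c2 (b * c) a d e)
  have s66 : (((b * d) * e) * c) * a - ((((b * d) * e) * a) * c + (((b * d) * a) * e) * c - (((b * d) * a) * c) * e) = 0 := sub_eq_zero_of_eq (c2 (b * d) a c e)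
  have s67 : (((b * d) * c) * e) * a - ((((b * d) * c) * a) * e + (((b * d) * a) * c) * e - (((b * d) * a) * e) * c) = 0 := sub_eq_zero_of_eq (c2 (b * d) a e c)
  have s68 : (((b * e) * d) * c) * a - ((((b * e) * d) * a) * c + (((b * e) * a) * d) * c - (((b * e) * a) * c) * d) = 0 := sub_eq_zero_of_eq (c2 (b * e) a c d)
  have s69 : (((b * e) * c) * d) * a - ((((b * e) * c) * a) * d + (((b * e) * a) * c) * d - (((b * e) * a) * d) * c) = 0 := sub_eq_zero_of_eq (c2 (b * e) a d c)
  have s70 : (((c * d) * e) * b) * a - ((((c * d) * e) * a) * b + (((c * d) * a) * e) * b - (((c * d) * a) * b) * e) = 0 := sub_eq_zero_of_eq (c2 (c * d) a b e)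
  have s71 : (((c * d) * b) * e) * a - ((((c * d) * b) * a) * e + (((c * d) * a) * b) * e - (((c * d) * a) * e) * b) = 0 := sub_eq_zero_of_eq (c2 (c * d) a e b)
  have s72 : (((c * e) * d) * b) * a - ((((c * e) * d) * a) * b + (((c * e) * a) * d) * b - (((c * e) * a) * b) * d) = 0 := sub_eq_zero_of_eq (c2 (c * e) a b d)
  have s73 : (((c * e) * b) * d) * a - ((((c * e) * b) * a) * d + (((c * e) * a) * b) * d - (((c * e) * a) * d) * b) = 0 := sub_eq_zero_of_eq (c2 (c * e) a d b)
  have s74 : (((d * e) * c) * b) * a - ((((d * e) * c) * a) * b + (((d * e) * a) * c) * b - (((d * e) * a) * b) * c) = 0 := sub_eq_zero_of_eq (c2 (d * e) a b c)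
  have s75 : (((d * e) * b) * c) * a - ((((d * e) * b) * a) * c + (((d * e) * a) * b) * c - (((d * e) * a) * c) * b) = 0 := sub_eq_zero_of_eq (c2 (d * e) a c b)
  have s76 : ((c * e) * d) * (a * b) - (((c * e) * (a * b)) * d + ((c * (a * b)) * e) * d - ((c * (a * b)) * d) * e) = 0 := sub_eq_zero_of_eq (c2 c (a * b) d e)
  have s77 : ((b * e) * d) * (a * c) - (((b * e) * (a * c)) * d + ((b * (a * c)) * e) * d - ((b * (a * c)) * d) * e) = 0 := sub_eq_zero_of_eq (c2 b (a * c) d e)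
  have s78 : ((b * e) * c) * (a * d) - (((b * e) * (a * d)) * c + ((b * (a * d)) * e) * c - ((b * (a * d)) * c) * e) = 0 := sub_eq_zero_of_eq (c2 b (a * d) c e)
  have s79 : ((b * d) * c) * (a * e) - (((b * d) * (a * e)) * c + ((b * (a * e)) * d) * c - ((b * (a * e)) * c) * d) = 0 := sub_eq_zero_of_eq (c2 b (a * e) c d)
  have s80 : ((a * e) * d) * (b * c) - (((a * e) * (b * c)) * d + ((a * (b * c)) * e) * d - ((a * (b * c)) * d) * e) = 0 := sub_eq_zero_of_eq (c2 a (b * c) d e)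
  have s81 : ((a * e) * c) * (b * d) - (((a * e) * (b * d)) * c + ((a * (b * d)) * e) * c - ((a * (b * d)) * c) * e) = 0 := sub_eq_zero_of_eq (c2 a (b * d) c e)
  have s82 : ((a * d) * c) * (b * e) - (((a * d) * (b * e)) * c + ((a * (b * e)) * d) * c - ((a * (b * e)) * c) * d) = 0 := sub_eq_zero_of_eq (c2 a (b * e) c d)
  have s83 : ((a * e) * b) * (c * d) - (((a * e) * (c * d)) * b + ((a * (c * d)) * e) * b - ((a * (c * d)) * b) * e) = 0 := sub_eq_zero_of_eq (c2 a (c * d) b e)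
  have s84 : ((a * d) * b) * (c * e) - (((a * d) * (c * e)) * b + ((a * (c * e)) * d) * b - ((a * (c * e)) * b) * d) = 0 := sub_eq_zero_of_eq (c2 a (c * e) b d)
  have s85 : ((a * c) * b) * (d * e) - (((a * c) * (d * e)) * b + ((a * (d * e)) * c) * b - ((a * (d * e)) * b) * c) = 0 := sub_eq_zero_of_eq (c2 a (d * e) b c)
  have s86 : (((a * d) * c) * b) * e - ((((a * d) * b) * c) * e + (((a * b) * d) * c) * e - (((a * b) * c) * d) * e) = 0 := sub_eq_zero_of_eq (by rw [c2 a b c d]; simp only [add_mul, sub_mul])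
  have s87 : (((a * e) * c) * b) * d - ((((a * e) * b) * c) * d + (((a * b) * e) * c) * d - (((a * b) * c) * e) * d) = 0 := sub_eq_zero_of_eq (by rw [c2 a b c e]; simp only [add_mul, sub_mul])
  have s88 : (((a * c) * d) * b) * e - ((((a * c) * b) * d) * e + (((a * b) * c) * d) * e - (((a * b) * d) * c) * e) = 0 := sub_eq_zero_of_eq (by rw [c2 a b d c]; simp only [add_mul, sub_mul])
  have s89 : (((a * e) * d) * b) * c - ((((a * e) * b) * d) * c + (((a * b) * e) * d) * c - (((a * b) * d) * e) * c) = 0 := sub_eq_zero_of_eq (by rw [c2 a b d e]; simp only [add_mul, sub_mul])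
  have s90 : (((a * c) * e) * b) * d - ((((a * c) * b) * e) * d + (((a * b) * c) * e) * d - (((a * b) * e) * c) * d) = 0 := sub_eq_zero_of_eq (by rw [c2 a b e c]; simp only [add_mul, sub_mul])
  have s91 : (((a * d) * e) * b) * c - ((((a * d) * b) * e) * c + (((a * b) * d) * e) * c - (((a * b) * e) * d) * c) = 0 := sub_eq_zero_of_eq (by rw [c2 a b e d]; simp only [add_mul, sub_mul])
  have s92 : (((b * d) * c) * a) * e - ((((b * d) * a) * c) * e + (((b * a) * d) * c) * e - (((b * a) * c) * d) * e) = 0 := sub_eq_zero_of_eq (by rw [c2 b a c d]; simp only [add_mul, sub_mul])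
  have s93 : (((b * e) * c) * a) * d - ((((b * e) * a) * c) * d + (((b * a) * e) * c) * d - (((b * a) * c) * e) * d) = 0 := sub_eq_zero_of_eq (by rw [c2 b a c e]; simp only [add_mul, sub_mul])
  have key : (36 : ℤ) • ((((a * b) * c + (b * c) * a + (c * a) * b) * d) * e) =
      (-1 : ℤ) • (((a * b) * c) * (d * e) - ((a * b) * ((e * c) * d) + e * ((c * d) * (a * b)) + c * ((d * (a * b)) * e) + d * (((a * b) * e) * c))) +
      (-19 : ℤ) • (((a * b) * c) * (e * d) - ((a * b) * ((d * c) * e) + d * ((c * e) * (a * b)) + c * ((e * (a * b)) * d) + e * (((a * b) * d) * c))) +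
      (-18 : ℤ) • (((a * b) * d) * (c * e) - ((a * b) * ((e * d) * c) + e * ((d * c) * (a * b)) + d * ((c * (a * b)) * e) + c * (((a * b) * e) * d))) +
      (-20 : ℤ) • (((a * b) * d) * (e * c) - ((a * b) * ((c * d) * e) + c * ((d * e) * (a * b)) + d * ((e * (a * b)) * c) + e * (((a * b) * c) * d))) +
      (-10 : ℤ) • (((a * b) * e) * (c * d) - ((a * b) * ((d * e) * c) + d * ((e * c) * (a * b)) + e * ((c * (a * b)) * d) + c * (((a * b) * d) * e))) +
      (-5 : ℤ) • (((a * c) * b) * (d * e) - ((a * c) * ((e * b) * d) + e * ((b * d) * (a * c)) + b * ((d * (a * c)) * e) + d * (((a * c) * e) * b))) +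
      (13 : ℤ) • (((a * c) * b) * (e * d) - ((a * c) * ((d * b) * e) + d * ((b * e) * (a * c)) + b * ((e * (a * c)) * d) + e * (((a * c) * d) * b))) +
      (3 : ℤ) • (((a * c) * d) * (b * e) - ((a * c) * ((e * d) * b) + e * ((d * b) * (a * c)) + d * ((b * (a * c)) * e) + b * (((a * c) * e) * d))) +
      (-4 : ℤ) • (((a * c) * d) * (e * b) - ((a * c) * ((b * d) * e) + b * ((d * e) * (a * c)) + d * ((e * (a * c)) * b) + e * (((a * c) * b) * d))) +
      (-5 : ℤ) • (((a * c) * e) * (b * d) - ((a * c) * ((d * e) * b) + d * ((e * b) * (a * c)) + e * ((b * (a * c)) * d) + b * (((a * c) * d) * e))) +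
      (-23 : ℤ) • (((a * d) * b) * (c * e) - ((a * d) * ((e * b) * c) + e * ((b * c) * (a * d)) + b * ((c * (a * d)) * e) + c * (((a * d) * e) * b))) +
      (-7 : ℤ) • (((a * d) * b) * (e * c) - ((a * d) * ((c * b) * e) + c * ((b * e) * (a * d)) + b * ((e * (a * d)) * c) + e * (((a * d) * c) * b))) +
      (-13 : ℤ) • (((a * d) * c) * (b * e) - ((a * d) * ((e * c) * b) + e * ((c * b) * (a * d)) + c * ((b * (a * d)) * e) + b * (((a * d) * e) * c))) +
      (-14 : ℤ) • (((a * d) * c) * (e * b) - ((a * d) * ((b * c) * e) + b * ((c * e) * (a * d)) + c * ((e * (a * d)) * b) + e * (((a * d) * b) * c))) +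
      (-13 : ℤ) • (((a * d) * e) * (b * c) - ((a * d) * ((c * e) * b) + c * ((e * b) * (a * d)) + e * ((b * (a * d)) * c) + b * (((a * d) * c) * e))) +
      (-17 : ℤ) • (((a * e) * b) * (c * d) - ((a * e) * ((d * b) * c) + d * ((b * c) * (a * e)) + b * ((c * (a * e)) * d) + c * (((a * e) * d) * b))) +
      (-22 : ℤ) • (((a * e) * b) * (d * c) - ((a * e) * ((c * b) * d) + c * ((b * d) * (a * e)) + b * ((d * (a * e)) * c) + d * (((a * e) * c) * b))) +
      (-4 : ℤ) • (((a * e) * c) * (d * b) - ((a * e) * ((b * c) * d) + b * ((c * d) * (a * e)) + c * ((d * (a * e)) * b) + d * (((a * e) * b) * c))) +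
      (8 : ℤ) • (((a * e) * d) * (b * c) - ((a * e) * ((c * d) * b) + c * ((d * b) * (a * e)) + d * ((b * (a * e)) * c) + b * (((a * e) * c) * d))) +
      (7 : ℤ) • (((b * c) * a) * (d * e) - ((b * c) * ((e * a) * d) + e * ((a * d) * (b * c)) + a * ((d * (b * c)) * e) + d * (((b * c) * e) * a))) +
      (-11 : ℤ) • (((b * c) * a) * (e * d) - ((b * c) * ((d * a) * e) + d * ((a * e) * (b * c)) + a * ((e * (b * c)) * d) + e * (((b * c) * d) * a))) +
      (-16 : ℤ) • (((b * c) * d) * (a * e) - ((b * c) * ((e * d) * a) + e * ((d * a) * (b * c)) + d * ((a * (b * c)) * e) + a * (((b * c) * e) * d))) +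
      (2 : ℤ) • (((b * c) * d) * (e * a) - ((b * c) * ((a * d) * e) + a * ((d * e) * (b * c)) + d * ((e * (b * c)) * a) + e * (((b * c) * a) * d))) +
      (7 : ℤ) • (((b * c) * e) * (a * d) - ((b * c) * ((d * e) * a) + d * ((e * a) * (b * c)) + e * ((a * (b * c)) * d) + a * (((b * c) * d) * e))) +
      (27 : ℤ) • (((b * d) * a) * (c * e) - ((b * d) * ((e * a) * c) + e * ((a * c) * (b * d)) + a * ((c * (b * d)) * e) + c * (((b * d) * e) * a))) +
      (11 : ℤ) • (((b * d) * a) * (e * c) - ((b * d) * ((c * a) * e) + c * ((a * e) * (b * d)) + a * ((e * (b * d)) * c) + e * (((b * d) * c) * a))) +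
      (16 : ℤ) • (((b * d) * c) * (e * a) - ((b * d) * ((a * c) * e) + a * ((c * e) * (b * d)) + c * ((e * (b * d)) * a) + e * (((b * d) * a) * c))) +
      (17 : ℤ) • (((b * d) * e) * (a * c) - ((b * d) * ((c * e) * a) + c * ((e * a) * (b * d)) + e * ((a * (b * d)) * c) + a * (((b * d) * c) * e))) +
      (2 : ℤ) • (((b * e) * a) * (c * d) - ((b * e) * ((d * a) * c) + d * ((a * c) * (b * e)) + a * ((c * (b * e)) * d) + c * (((b * e) * d) * a))) +
      (9 : ℤ) • (((b * e) * a) * (d * c) - ((b * e) * ((c * a) * d) + c * ((a * d) * (b * e)) + a * ((d * (b * e)) * c) + d * (((b * e) * c) * a))) +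
      (2 : ℤ) • (((b * e) * c) * (a * d) - ((b * e) * ((d * c) * a) + d * ((c * a) * (b * e)) + c * ((a * (b * e)) * d) + a * (((b * e) * d) * c))) +
      (2 : ℤ) • (((b * e) * c) * (d * a) - ((b * e) * ((a * c) * d) + a * ((c * d) * (b * e)) + c * ((d * (b * e)) * a) + d * (((b * e) * a) * c))) +
      (-6 : ℤ) • (((b * e) * d) * (a * c) - ((b * e) * ((c * d) * a) + c * ((d * a) * (b * e)) + d * ((a * (b * e)) * c) + a * (((b * e) * c) * d))) +
      (-8 : ℤ) • (((c * d) * a) * (e * b) - ((c * d) * ((b * a) * e) + b * ((a * e) * (c * d)) + a * ((e * (c * d)) * b) + e * (((c * d) * b) * a))) +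
      (-6 : ℤ) • (((c * d) * b) * (a * e) - ((c * d) * ((e * b) * a) + e * ((b * a) * (c * d)) + b * ((a * (c * d)) * e) + a * (((c * d) * e) * b))) +
      (2 : ℤ) • (((c * d) * b) * (e * a) - ((c * d) * ((a * b) * e) + a * ((b * e) * (c * d)) + b * ((e * (c * d)) * a) + e * (((c * d) * a) * b))) +
      (1 : ℤ) • (((c * d) * e) * (a * b) - ((c * d) * ((b * e) * a) + b * ((e * a) * (c * d)) + e * ((a * (c * d)) * b) + a * (((c * d) * b) * e))) +
      (1 : ℤ) • (((c * e) * a) * (b * d) - ((c * e) * ((d * a) * b) + d * ((a * b) * (c * e)) + a * ((b * (c * e)) * d) + b * (((c * e) * d) * a))) +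
      (18 : ℤ) • (((c * e) * a) * (d * b) - ((c * e) * ((b * a) * d) + b * ((a * d) * (c * e)) + a * ((d * (c * e)) * b) + d * (((c * e) * b) * a))) +
      (16 : ℤ) • (((c * e) * b) * (a * d) - ((c * e) * ((d * b) * a) + d * ((b * a) * (c * e)) + b * ((a * (c * e)) * d) + a * (((c * e) * d) * b))) +
      (16 : ℤ) • (((c * e) * b) * (d * a) - ((c * e) * ((a * b) * d) + a * ((b * d) * (c * e)) + b * ((d * (c * e)) * a) + d * (((c * e) * a) * b))) +
      (-3 : ℤ) • (((d * e) * a) * (b * c) - ((d * e) * ((c * a) * b) + c * ((a * b) * (d * e)) + a * ((b * (d * e)) * c) + b * (((d * e) * c) * a))) +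
      (20 : ℤ) • (((d * e) * a) * (c * b) - ((d * e) * ((b * a) * c) + b * ((a * c) * (d * e)) + a * ((c * (d * e)) * b) + c * (((d * e) * b) * a))) +
      (10 : ℤ) • (((d * e) * b) * (a * c) - ((d * e) * ((c * b) * a) + c * ((b * a) * (d * e)) + b * ((a * (d * e)) * c) + a * (((d * e) * c) * b))) +
      (2 : ℤ) • (((d * e) * b) * (c * a) - ((d * e) * ((a * b) * c) + a * ((b * c) * (d * e)) + b * ((c * (d * e)) * a) + c * (((d * e) * a) * b))) +
      (-8 : ℤ) • (((d * e) * c) * (a * b) - ((d * e) * ((b * c) * a) + b * ((c * a) * (d * e)) + c * ((a * (d * e)) * b) + a * (((d * e) * b) * c))) +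
      (-5 : ℤ) • (((a * b) * (c * d)) * e - ((a * ((d * b) * c)) * e + (d * ((b * c) * a)) * e + (b * ((c * a) * d)) * e + (c * ((a * d) * b)) * e)) +
      (7 : ℤ) • (((a * b) * (c * e)) * d - ((a * ((e * b) * c)) * d + (e * ((b * c) * a)) * d + (b * ((c * a) * e)) * d + (c * ((a * e) * b)) * d)) +
      (-16 : ℤ) • (((a * b) * (d * c)) * e - ((a * ((c * b) * d)) * e + (c * ((b * d) * a)) * e + (b * ((d * a) * c)) * e + (d * ((a * c) * b)) * e)) +
      (-7 : ℤ) • (((a * b) * (d * e)) * c - ((a * ((e * b) * d)) * c + (e * ((b * d) * a)) * c + (b * ((d * a) * e)) * c + (d * ((a * e) * b)) * c)) +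
      (-40 : ℤ) • (((a * c) * (b * d)) * e - ((a * ((d * c) * b)) * e + (d * ((c * b) * a)) * e + (c * ((b * a) * d)) * e + (b * ((a * d) * c)) * e)) +
      (17 : ℤ) • (((a * c) * (b * e)) * d - ((a * ((e * c) * b)) * d + (e * ((c * b) * a)) * d + (c * ((b * a) * e)) * d + (b * ((a * e) * c)) * d)) +
      (-5 : ℤ) • (((a * c) * (d * b)) * e - ((a * ((b * c) * d)) * e + (b * ((c * d) * a)) * e + (c * ((d * a) * b)) * e + (d * ((a * b) * c)) * e)) +
      (-17 : ℤ) • (((a * c) * (d * e)) * b - ((a * ((e * c) * d)) * b + (e * ((c * d) * a)) * b + (c * ((d * a) * e)) * b + (d * ((a * e) * c)) * b)) +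
      (-33 : ℤ) • (((a * d) * (b * c)) * e - ((a * ((c * d) * b)) * e + (c * ((d * b) * a)) * e + (d * ((b * a) * c)) * e + (b * ((a * c) * d)) * e)) +
      (15 : ℤ) • (((a * d) * (b * e)) * c - ((a * ((e * d) * b)) * c + (e * ((d * b) * a)) * c + (d * ((b * a) * e)) * c + (b * ((a * e) * d)) * c)) +
      (-15 : ℤ) • (((a * d) * (c * e)) * b - ((a * ((e * d) * c)) * b + (e * ((d * c) * a)) * b + (d * ((c * a) * e)) * b + (c * ((a * e) * d)) * b)) +
      (14 : ℤ) • ((((a * b) * e) * d) * c - ((((a * b) * e) * c) * d + (((a * b) * c) * e) * d - (((a * b) * c) * d) * e)) +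
      (9 : ℤ) • ((((a * b) * d) * e) * c - ((((a * b) * d) * c) * e + (((a * b) * c) * d) * e - (((a * b) * c) * e) * d)) +
      (-5 : ℤ) • ((((a * c) * e) * d) * b - ((((a * c) * e) * b) * d + (((a * c) * b) * e) * d - (((a * c) * b) * d) * e)) +
      (-11 : ℤ) • ((((a * d) * e) * c) * b - ((((a * d) * e) * b) * c + (((a * d) * b) * e) * c - (((a * d) * b) * c) * e)) +
      (-10 : ℤ) • ((((a * d) * c) * e) * b - ((((a * d) * c) * b) * e + (((a * d) * b) * c) * e - (((a * d) * b) * e) * c)) +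
      (-7 : ℤ) • ((((a * e) * d) * c) * b - ((((a * e) * d) * b) * c + (((a * e) * b) * d) * c - (((a * e) * b) * c) * d)) +
      (-8 : ℤ) • ((((a * e) * c) * d) * b - ((((a * e) * c) * b) * d + (((a * e) * b) * c) * d - (((a * e) * b) * d) * c)) +
      (5 : ℤ) • ((((b * c) * e) * d) * a - ((((b * c) * e) * a) * d + (((b * c) * a) * e) * d - (((b * c) * a) * d) * e)) +
      (11 : ℤ) • ((((b * d) * e) * c) * a - ((((b * d) * e) * a) * c + (((b * d) * a) * e) * c - (((b * d) * a) * c) * e)) +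
      (10 : ℤ) • ((((b * d) * c) * e) * a - ((((b * d) * c) * a) * e + (((b * d) * a) * c) * e - (((b * d) * a) * e) * c)) +
      (7 : ℤ) • ((((b * e) * d) * c) * a - ((((b * e) * d) * a) * c + (((b * e) * a) * d) * c - (((b * e) * a) * c) * d)) +
      (8 : ℤ) • ((((b * e) * c) * d) * a - ((((b * e) * c) * a) * d + (((b * e) * a) * c) * d - (((b * e) * a) * d) * c)) +
      (-2 : ℤ) • ((((c * d) * e) * b) * a - ((((c * d) * e) * a) * b + (((c * d) * a) * e) * b - (((c * d) * a) * b) * e)) +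
      (-1 : ℤ) • ((((c * d) * b) * e) * a - ((((c * d) * b) * a) * e + (((c * d) * a) * b) * e - (((c * d) * a) * e) * b)) +
      (2 : ℤ) • ((((c * e) * d) * b) * a - ((((c * e) * d) * a) * b + (((c * e) * a) * d) * b - (((c * e) * a) * b) * d)) +
      (1 : ℤ) • ((((c * e) * b) * d) * a - ((((c * e) * b) * a) * d + (((c * e) * a) * b) * d - (((c * e) * a) * d) * b)) +
      (10 : ℤ) • ((((d * e) * c) * b) * a - ((((d * e) * c) * a) * b + (((d * e) * a) * c) * b - (((d * e) * a) * b) * c)) +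
      (5 : ℤ) • ((((d * e) * b) * c) * a - ((((d * e) * b) * a) * c + (((d * e) * a) * b) * c - (((d * e) * a) * c) * b)) +
      (-1 : ℤ) • (((c * e) * d) * (a * b) - (((c * e) * (a * b)) * d + ((c * (a * b)) * e) * d - ((c * (a * b)) * d) * e)) +
      (1 : ℤ) • (((b * e) * d) * (a * c) - (((b * e) * (a * c)) * d + ((b * (a * c)) * e) * d - ((b * (a * c)) * d) * e)) +
      (-23 : ℤ) • (((b * e) * c) * (a * d) - (((b * e) * (a * d)) * c + ((b * (a * d)) * e) * c - ((b * (a * d)) * c) * e)) +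
      (-1 : ℤ) • (((b * d) * c) * (a * e) - (((b * d) * (a * e)) * c + ((b * (a * e)) * d) * c - ((b * (a * e)) * c) * d)) +
      (-1 : ℤ) • (((a * e) * d) * (b * c) - (((a * e) * (b * c)) * d + ((a * (b * c)) * e) * d - ((a * (b * c)) * d) * e)) +
      (23 : ℤ) • (((a * e) * c) * (b * d) - (((a * e) * (b * d)) * c + ((a * (b * d)) * e) * c - ((a * (b * d)) * c) * e)) +
      (1 : ℤ) • (((a * d) * c) * (b * e) - (((a * d) * (b * e)) * c + ((a * (b * e)) * d) * c - ((a * (b * e)) * c) * d)) +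
      (-5 : ℤ) • (((a * e) * b) * (c * d) - (((a * e) * (c * d)) * b + ((a * (c * d)) * e) * b - ((a * (c * d)) * b) * e)) +
      (17 : ℤ) • (((a * d) * b) * (c * e) - (((a * d) * (c * e)) * b + ((a * (c * e)) * d) * b - ((a * (c * e)) * b) * d)) +
      (15 : ℤ) • (((a * c) * b) * (d * e) - (((a * c) * (d * e)) * b + ((a * (d * e)) * c) * b - ((a * (d * e)) * b) * c)) +
      (21 : ℤ) • ((((a * d) * c) * b) * e - ((((a * d) * b) * c) * e + (((a * b) * d) * c) * e - (((a * b) * c) * d) * e)) +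
      (-3 : ℤ) • ((((a * e) * c) * b) * d - ((((a * e) * b) * c) * d + (((a * b) * e) * c) * d - (((a * b) * c) * e) * d)) +
      (15 : ℤ) • ((((a * c) * d) * b) * e - ((((a * c) * b) * d) * e + (((a * b) * c) * d) * e - (((a * b) * d) * c) * e)) +
      (-9 : ℤ) • ((((a * e) * d) * b) * c - ((((a * e) * b) * d) * c + (((a * b) * e) * d) * c - (((a * b) * d) * e) * c)) +
      (3 : ℤ) • ((((a * c) * e) * b) * d - ((((a * c) * b) * e) * d + (((a * b) * c) * e) * d - (((a * b) * e) * c) * d)) +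
      (-9 : ℤ) • ((((a * d) * e) * b) * c - ((((a * d) * b) * e) * c + (((a * b) * d) * e) * c - (((a * b) * e) * d) * c)) +
      (-6 : ℤ) • ((((b * d) * c) * a) * e - ((((b * d) * a) * c) * e + (((b * a) * d) * c) * e - (((b * a) * c) * d) * e)) +
      (6 : ℤ) • ((((b * e) * c) * a) * d - ((((b * e) * a) * c) * d + (((b * a) * e) * c) * d - (((b * a) * c) * e) * d)) := by
    simp only [add_mul,
      sw_ll (a * e) b d c,
      sw_l (b * (a * e)) c d,
      sw_o (c * (b * (a * e))) d,
      sw_rl (b * c) e a d,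
      sw_r (e * (b * c)) d a,
      sw_ll (a * d) c b e,
      sw_l (c * (a * d)) e b,
      sw_o (e * (c * (a * d))) b,
      sw_ll (c * e) a d b,
      sw_l (a * (c * e)) b d,
      sw_o (b * (a * (c * e))) d,
      sw_ll (a * b) c d e,
      sw_l (c * (a * b)) e d,
      sw_o (e * (c * (a * b))) d,
      sw_lr (a * b) c e d,
      sw_o (d * (c * (a * b))) e,
      sw_r (b * c) e (a * d),
      sw_rl c b e (a * d),
      sw_r (b * c) (a * d) e,
      sw_lrl e d c a b,
      sw_lr (d * e) b c a,
      sw_o (a * (b * (d * e))) c,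
      sw_ll (c * e) a b d,
      sw_l (a * (c * e)) d b,
      sw_o (d * (a * (c * e))) b,
      sw_lr (b * c) a d e,
      sw_o (e * (a * (b * c))) d,
      sw_l (a * c) d (e * b),
      sw_r e b (d * (a * c)),
      sw_o (d * (a * c)) (b * e),
      sw_rl c a (b * d) e,
      sw_r (a * c) e (b * d),
      sw_l (a * d) b (c * e),
      sw_rl (a * c) d e b,
      sw_r (d * (a * c)) b e,
      sw_r (a * b) d (c * e),
      sw_rl (b * d) c a e,
      sw_r (c * (b * d)) e a,
      sw_r (e * (c * d)) a b,
      sw_rl (b * e) d a c,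
      sw_r (d * (b * e)) c a,
      sw_r (b * (a * c)) d e,
      sw_r (e * (a * d)) c b,
      sw_lr d c e (a * b),
      sw_o ((a * b) * (c * d)) e,
      sw_lr (a * e) d c b,
      sw_o (b * (d * (a * e))) c,
      sw_r (c * (d * e)) a b,
      sw_lr (a * c) b e d,
      sw_o (d * (b * (a * c))) e,
      sw_rl (a * d) c b e,
      sw_r (c * (a * d)) e b,
      sw_l (b * d) c (a * e),
      sw_o (c * (b * d)) (a * e),
      sw_ll (a * c) b e d,
      sw_l (b * (a * c)) d e,
      sw_lrl e c b a d,
      sw_lr (c * e) d b a,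
      sw_o (a * (d * (c * e))) b,
      sw_lrl c b e d a,
      sw_lr (b * c) a e d,
      sw_o (d * (a * (b * c))) e,
      sw_rl (a * d) e c b,
      sw_r (e * (a * d)) b c,
      sw_rl (a * c) e d b,
      sw_r (e * (a * c)) b d,
      sw_r (c * d) (a * b) e,
      sw_r (a * c) d (b * e),
      sw_rl (c * d) a e b,
      sw_r (a * (c * d)) b e,
      sw_rl (b * e) c d a,
      sw_r (c * (b * e)) a d,
      sw_ll (a * b) e d c,
      sw_l (e * (a * b)) c d,
      sw_o (c * (e * (a * b))) d,
      sw_rl b a (c * d) e,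
      sw_r (a * b) e (c * d),
      sw_ll (b * c) a d e,
      sw_l (a * (b * c)) e d,
      sw_r (b * c) a (d * e),
      sw_o (d * e) (a * (b * c)),
      sw_r (d * e) c (a * b),
      sw_r (e * (a * b)) c d,
      sw_ll (b * c) a e d,
      sw_l (a * (b * c)) d e,
      sw_rl d c (b * e) a,
      sw_r (c * d) a (b * e),
      sw_o (b * e) (a * (c * d)),
      sw_l (a * d) c (b * e),
      sw_o (c * (a * d)) (b * e),
      sw_lrl d b c e a,
      sw_lr (b * d) a c e,
      sw_o (e * (a * (b * d))) c,
      sw_r (c * d) (a * e) b,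
      sw_r (b * c) (a * e) d,
      sw_ll (c * e) d a b,
      sw_l (d * (c * e)) b a,
      sw_o (b * (d * (c * e))) a,
      sw_r (d * (c * e)) a b,
      sw_lr (c * d) b e a,
      sw_o (a * (b * (c * d))) e,
      sw_l (b * c) a (d * e),
      sw_r (c * (a * b)) e d,
      sw_r (e * (b * d)) a c,
      sw_ll (b * e) d c a,
      sw_l (d * (b * e)) a c,
      sw_o (a * (d * (b * e))) c,
      sw_rl c a d (b * e),
      sw_l (c * d) e (a * b),
      sw_o (e * (c * d)) (a * b),
      sw_rl (c * d) b a e,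
      sw_r (b * (c * d)) e a,
      sw_ll (a * c) d e b,
      sw_l (d * (a * c)) b e,
      sw_o (b * (d * (a * c))) e,
      sw_l (c * e) (a * b) d,
      sw_o ((a * b) * (c * e)) d,
      sw_l (a * d) c (e * b),
      sw_r e b (c * (a * d)),
      sw_r (c * (a * b)) d e,
      sw_o ((a * d) * (b * e)) c,
      sw_rl (b * c) d e a,
      sw_r (d * (b * c)) a e,
      sw_r (a * b) c (d * e),
      sw_o (d * e) (c * (a * b)),
      sw_lrl d a e c b,
      sw_lr (a * d) b e c,
      sw_o (c * (b * (a * d))) e,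
      sw_lr d b e (a * c),
      sw_o ((a * c) * (b * d)) e,
      sw_rl b a e (c * d),
      sw_lrl c a d b e,
      sw_lr (a * c) e d b,
      sw_o (b * (e * (a * c))) d,
      sw_l (a * (d * e)) c b,
      sw_o (c * (a * (d * e))) b,
      sw_r (c * e) b (a * d),
      sw_l (d * e) a (b * c),
      sw_r (c * e) (a * d) b,
      sw_r (d * (b * e)) a c,
      sw_rl e d (a * c) b,
      sw_r (d * e) b (a * c),
      sw_rl d a (c * e) b,
      sw_r (a * d) b (c * e),
      sw_o (c * e) (b * (a * d)),
      sw_lrl e c d a b,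
      sw_lr (c * e) b d a,
      sw_o (a * (b * (c * e))) d,
      sw_rl d b (a * c) e,
      sw_r (b * d) e (a * c),
      sw_l (b * (a * c)) e d,
      sw_o (e * (b * (a * c))) d,
      sw_r (a * (b * c)) e d,
      sw_rl (d * e) a c b,
      sw_r (a * (d * e)) b c,
      sw_r (b * c) d (a * e),
      sw_l (b * c) a (e * d),
      sw_r e d (a * (b * c)),
      sw_o ((a * e) * (c * d)) b,
      sw_rl d a (b * c) e,
      sw_r (a * d) e (b * c),
      sw_r (e * (a * c)) d b,
      sw_l (b * c) d (e * a),
      sw_r e a (d * (b * c)),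
      sw_o (d * (b * c)) (a * e),
      sw_l (a * c) d (b * e),
      sw_o ((a * d) * (b * c)) e,
      sw_ll (a * e) d b c,
      sw_l (d * (a * e)) c b,
      sw_o (c * (d * (a * e))) b,
      sw_o ((a * c) * (b * e)) d,
      sw_l (b * e) c (d * a),
      sw_r d a (c * (b * e)),
      sw_o (c * (b * e)) (a * d),
      sw_l (a * (b * e)) c d,
      sw_o (c * (a * (b * e))) d,
      sw_rl e c d (a * b),
      sw_r (c * e) (a * b) d,
      sw_rl (c * e) b d a,
      sw_r (b * (c * e)) a d,
      sw_r (c * e) (b * d) a,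
      sw_rl b a d (c * e),
      sw_ll (c * d) e b a,
      sw_l (e * (c * d)) a b,
      sw_o (a * (e * (c * d))) b,
      sw_r (a * (b * e)) d c,
      sw_l (b * d) a (e * c),
      sw_r e c (a * (b * d)),
      sw_ll (a * d) e b c,
      sw_l (e * (a * d)) c b,
      sw_o (c * (e * (a * d))) b,
      sw_r (b * (a * e)) c d,
      sw_rl (b * d) e c a,
      sw_r (c * d) b (a * e),
      sw_ll (a * b) c e d,
      sw_l (c * (a * b)) d e,
      sw_ll (b * e) a d c,
      sw_rl e a b (c * d),
      sw_o ((a * c) * (d * e)) b,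
      sw_ll (a * b) d e c,
      sw_l (d * (a * b)) c e,
      sw_o (c * (d * (a * b))) e,
      sw_lr (b * d) a e c,
      sw_o (c * (a * (b * d))) e,
      sw_rl (a * e) c b d,
      sw_r (c * (a * e)) d b,
      sw_rl (b * e) a d c,
      sw_r (a * (b * e)) c d,
      sw_l (b * (a * e)) d c,
      sw_o (d * (b * (a * e))) c,
      sw_ll (a * e) c d b,
      sw_l (c * (a * e)) b d,
      sw_o (b * (c * (a * e))) d,
      sw_rl e a (b * d) c,
      sw_r (a * e) c (b * d),
      sw_ll (a * e) c b d,
      sw_l (c * (a * e)) d b,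
      sw_o (d * (c * (a * e))) b,
      sw_rl (d * e) b a c,
      sw_r (b * (d * e)) c a,
      sw_l (a * c) b (e * d),
      sw_r e d (b * (a * c)),
      sw_rl d c (a * b) e,
      sw_r (c * d) e (a * b),
      sw_l (b * c) d (a * e),
      sw_ll (a * c) b d e,
      sw_ll (a * e) d c b,
      sw_l (d * (a * e)) b c,
      sw_lr (a * c) d e b,
      sw_rl (b * c) d a e,
      sw_r (d * (b * c)) e a,
      sw_rl e a (b * c) d,
      sw_r (a * e) d (b * c),
      sw_ll (b * d) c e a,
      sw_l (c * (b * d)) a e,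
      sw_o (a * (c * (b * d))) e,
      sw_lll b a e c d,
      sw_lrl c b d e a,
      sw_l (d * e) a (c * b),
      sw_r c b (a * (d * e)),
      sw_ll (c * e) d b a,
      sw_l (d * (c * e)) a b,
      sw_ll (a * b) e c d,
      sw_l (e * (a * b)) d c,
      sw_o (d * (e * (a * b))) c,
      sw_ll (b * e) d a c,
      sw_l (d * (b * e)) c a,
      sw_o (c * (d * (b * e))) a,
      sw_rl c a (d * e) b,
      sw_r (a * c) b (d * e),
      sw_o (d * e) (b * (a * c)),
      sw_rl (b * d) a e c,
      sw_r (a * (b * d)) c e,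
      sw_rl b a (d * e) c,
      sw_ll (c * d) b e a,
      sw_l (b * (c * d)) a e,
      sw_ll (b * c) e d a,
      sw_l (e * (b * c)) a d,
      sw_o (a * (e * (b * c))) d,
      sw_l (a * b) c (d * e),
      sw_l (b * d) (a * e) c,
      sw_o ((a * e) * (b * d)) c,
      sw_ll (a * d) e c b,
      sw_l (e * (a * d)) b c,
      sw_o (b * (e * (a * d))) c,
      sw_r (d * (a * e)) c b,
      sw_lr (a * e) d b c,
      sw_rl (a * e) b d c,
      sw_rl e d (a * b) c,
      sw_rl c a b (d * e),
      sw_ll (b * d) e c a,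
      sw_l (e * (b * d)) a c,
      sw_o (a * (e * (b * d))) c,
      sw_r (c * d) (b * e) a,
      sw_r (b * (a * d)) e c,
      sw_r (a * (b * c)) d e,
      sw_l (c * e) a (d * b),
      sw_r d b (a * (c * e)),
      sw_rl (a * b) c e d,
      sw_r (c * (b * e)) d a,
      sw_rl (b * e) d c a,
      sw_lrl d b e a c,
      sw_lr (b * d) c e a,
      sw_r (b * e) a (c * d),
      sw_o (c * d) (a * (b * e)),
      sw_rl (c * d) e a b,
      sw_r (e * (c * d)) b a,
      sw_lrl b a e c d,
      sw_lr (a * b) d e c,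
      sw_rl d b (a * e) c,
      sw_r (b * d) c (a * e),
      sw_l (a * e) d (b * c),
      sw_o (d * (a * e)) (b * c),
      sw_ll (b * c) e a d,
      sw_l (e * (b * c)) d a,
      sw_o (d * (e * (b * c))) a,
      sw_lrl d a b c e,
      sw_lr (a * d) e b c,
      sw_rl b a (c * e) d,
      sw_rl e c (a * d) b,
      sw_rl c a (b * e) d,
      sw_rl d b e (a * c),
      sw_r (b * d) (a * c) e,
      sw_ll (a * b) d c e,
      sw_l (d * (a * b)) e c,
      sw_o (e * (d * (a * b))) c,
      sw_l (a * (b * d)) c e,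
      sw_rl e d (b * c) a,
      sw_r (d * e) a (b * c),
      sw_o (b * c) (a * (d * e)),
      sw_l (a * e) b (d * c),
      sw_r d c (b * (a * e)),
      sw_rl (a * e) d c b,
      sw_r (d * (a * e)) b c,
      sw_l (b * (a * d)) c e,
      sw_lrl d a e b c,
      sw_lr (a * d) c e b,
      sw_o (b * (c * (a * d))) e,
      sw_rl d a c (b * e),
      sw_l (a * (c * d)) b e,
      sw_o (b * (a * (c * d))) e,
      sw_l (c * e) d (a * b),
      sw_o (d * (c * e)) (a * b),
      sw_rl e a d (b * c),
      sw_l (a * b) c (e * d),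
      sw_r e d (c * (a * b)),
      sw_ll (d * e) b c a,
      sw_l (b * (d * e)) a c,
      sw_l (a * b) e (c * d),
      sw_o (e * (a * b)) (c * d),
      sw_lrl c a e b d,
      sw_rl d b c (a * e),
      sw_r (b * d) (a * e) c,
      sw_lrl e d b a c,
      sw_lr (d * e) c b a,
      sw_o (a * (c * (d * e))) b,
      sw_rl (a * c) e b d,
      sw_o ((a * d) * (c * e)) b,
      sw_lr (b * c) d e a,
      sw_o (a * (d * (b * c))) e,
      sw_l (b * d) a (c * e),
      sw_rl c b (d * e) a,
      sw_lrl d c e a b,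
      sw_lll b a e d c,
      sw_l (b * e) (a * c) d,
      sw_lrl c a b d e,
      sw_lr (a * c) e b d,
      sw_o (d * (e * (a * c))) b,
      sw_r (a * (c * d)) e b,
      sw_rl (c * e) d a b,
      sw_r (d * (c * e)) b a,
      sw_lll c a e d b,
      sw_r (e * (b * d)) c a,
      sw_l (b * e) a (d * c),
      sw_r d c (a * (b * e)),
      sw_r (d * e) (a * b) c,
      sw_l (c * e) b (d * a),
      sw_r d a (b * (c * e)),
      sw_o (b * (c * e)) (a * d),
      sw_ll (a * d) b e c,
      sw_l (c * d) a (e * b),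
      sw_r e b (a * (c * d)),
      sw_rl b a c (d * e),
      sw_o ((a * e) * (b * c)) d,
      sw_rl d b (c * e) a,
      sw_r (b * d) a (c * e),
      sw_o (c * e) (a * (b * d)),
      sw_l (a * (d * e)) b c,
      sw_o (b * (a * (d * e))) c,
      sw_ll (c * e) b a d,
      sw_l (b * (c * e)) d a,
      sw_o (d * (b * (c * e))) a,
      sw_lr (a * e) b d c,
      sw_lr (a * e) b c d,
      sw_ll (c * e) b d a,
      sw_l (b * (c * e)) a d,
      sw_rl d a e (b * c),
      sw_l (b * e) c (a * d),
      sw_rl (b * e) c a d,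
      sw_ll (b * d) a e c,
      sw_rl (d * e) c a b,
      sw_r (c * (d * e)) b a,
      sw_rl e b (c * d) a,
      sw_ll (a * e) b c d,
      sw_l (d * e) b (a * c),
      sw_o (b * (d * e)) (a * c),
      sw_rl (a * b) e d c,
      sw_rl (a * d) c e b,
      sw_r (c * (a * d)) b e,
      sw_l (a * b) d (e * c),
      sw_r e c (d * (a * b)),
      sw_o (d * (a * b)) (c * e),
      sw_rl e a c (b * d),
      sw_rl (a * c) b e d,
      sw_l (d * e) b (c * a),
      sw_r c a (b * (d * e)),
      sw_rl (a * e) c d b,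
      sw_r (c * (a * e)) b d,
      sw_ll (b * e) a c d,
      sw_l (a * (b * e)) d c,
      sw_o (d * (a * (b * e))) c,
      sw_r (b * (a * d)) c e,
      sw_ll (a * c) e d b,
      sw_l (e * (a * c)) b d,
      sw_rl (b * d) c e a,
      sw_r (c * (b * d)) a e,
      sw_rl (a * b) d c e,
      sw_r (d * (a * b)) e c,
      sw_l (a * (c * d)) e b,
      sw_o (e * (a * (c * d))) b,
      sw_rl (a * b) e c d,
      sw_r (e * (a * b)) d c,
      sw_lrl d c b e a,
      sw_lr (c * d) a b e,
      sw_rl c b (a * e) d,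
      sw_r (c * e) a (b * d),
      sw_o (b * d) (a * (c * e)),
      sw_ll (c * d) b a e,
      sw_l (b * (c * d)) e a,
      sw_o (e * (b * (c * d))) a,
      sw_lr (a * e) c d b,
      sw_l (b * e) (a * d) c,
      sw_r (d * e) (a * c) b,
      sw_ll (b * e) c a d,
      sw_l (c * (b * e)) d a,
      sw_o (d * (c * (b * e))) a,
      sw_rl (b * c) e d a,
      sw_r (e * (b * c)) a d,
      sw_lll b a d c e,
      sw_l (b * e) a (c * d),
      sw_l (b * c) e (a * d),
      sw_o (e * (b * c)) (a * d),
      sw_lrl b a d c e,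
      sw_lr (a * b) e d c,
      sw_l (b * e) d (a * c),
      sw_o (d * (b * e)) (a * c),
      sw_l (b * (a * d)) e c,
      sw_o (e * (b * (a * d))) c,
      sw_r (b * e) (a * c) d,
      sw_lrl b a c d e,
      sw_lr (a * b) e c d,
      sw_lr (c * d) a e b,
      sw_rl e b (a * d) c,
      sw_r (b * e) c (a * d),
      sw_l (a * d) b (e * c),
      sw_r e c (b * (a * d)),
      sw_r (d * (a * c)) e b,
      sw_r (b * (c * e)) d a,
      sw_rl e c (a * b) d,
      sw_r (c * e) d (a * b),
      sw_rl e b (a * c) d,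
      sw_r (b * e) d (a * c),
      sw_ll (a * d) c e b,
      sw_l (c * (a * d)) b e,
      sw_ll (d * e) a b c,
      sw_r (a * (d * e)) c b,
      sw_r (a * (c * e)) d b,
      sw_lrl d b e c a,
      sw_rl c b (a * d) e,
      sw_l (a * c) e (b * d),
      sw_o (e * (a * c)) (b * d),
      sw_r (b * (a * c)) e d,
      sw_rl e b c (a * d),
      sw_r (b * e) (a * d) c,
      sw_l (a * d) e (b * c),
      sw_o (e * (a * d)) (b * c),
      sw_l (a * (b * d)) e c,
      sw_ll (b * d) e a c,
      sw_l (e * (b * d)) c a,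
      sw_o (c * (e * (b * d))) a,
      sw_rl (a * c) d b e,
      sw_l (c * d) b (e * a),
      sw_r e a (b * (c * d)),
      sw_o (b * (c * d)) (a * e),
      sw_rl e b d (a * c),
      sw_ll (d * e) c a b,
      sw_l (c * (d * e)) b a,
      sw_o (b * (c * (d * e))) a,
      sw_ll (b * e) c d a,
      sw_l (c * (b * e)) a d,
      sw_o (a * (c * (b * e))) d,
      sw_ll (c * d) a e b,
      sw_ll (d * e) b a c,
      sw_l (b * (d * e)) c a,
      sw_o (c * (b * (d * e))) a,
      sw_lrl e b c a d,
      sw_lr (b * e) d c a,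
      sw_rl (d * e) b c a,
      sw_r (b * (d * e)) a c,
      sw_ll (d * e) a c b,
      sw_l (a * e) c (d * b),
      sw_r d b (c * (a * e)),
      sw_o (c * (a * e)) (b * d),
      sw_ll (a * c) e b d,
      sw_l (e * (a * c)) d b,
      sw_rl d c e (a * b),
      sw_l (c * e) a (b * d),
      sw_ll (d * e) c b a,
      sw_l (c * (d * e)) a b,
      sw_l (d * e) c (a * b),
      sw_o (c * (d * e)) (a * b),
      sw_o ((a * b) * (d * e)) c,
      sw_r (d * e) (b * c) a,
      sw_lr (a * e) c b d,
      sw_ll (b * d) a c e,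
      sw_rl (a * b) d e c,
      sw_r (d * (a * b)) c e,
      sw_l (b * d) e (a * c),
      sw_o (e * (b * d)) (a * c),
      sw_rl (d * e) c b a,
      sw_rl (a * d) b e c,
      sw_lrl d a c b e,
      sw_lr (a * d) e c b,
      sw_l (a * e) c (b * d),
      sw_ll (b * d) c a e,
      sw_l (c * (b * d)) e a,
      sw_o (e * (c * (b * d))) a,
      sw_ll (c * d) e a b,
      sw_l (e * (c * d)) b a,
      sw_o (b * (e * (c * d))) a,
      sw_lll b a d e c,
      sw_lrl b a e d c,
      sw_l (c * d) b (a * e),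
      sw_rl (c * e) a d b,
      sw_r (a * (c * e)) b d,
      sw_l (a * b) d (c * e),
      sw_ll (a * d) b c e,
      sw_l (b * d) c (e * a),
      sw_r e a (c * (b * d)),
      sw_l (c * e) b (a * d),
      sw_rl (c * e) d b a,
      sw_lrl e b d a c,
      sw_lr (b * e) c d a,
      sw_rl (b * c) a e d,
      sw_rl (a * d) e b c,
      sw_lrl c b e a d,
      sw_rl (c * d) b e a,
      sw_r (b * (c * d)) a e,
      sw_ll (c * d) a b e,
      sw_rl d a (b * e) c,
      sw_r (a * d) c (b * e),
      sw_l (a * c) b (d * e),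
      sw_l (a * e) b (c * d)]
    abel
  have zer : (36 : ℤ) • ((((a * b) * c + (b * c) * a + (c * a) * b) * d) * e) = 0 := by
    rw [key]
    simp only [s1, s2, s3, s4, s5, s6, s7, s8, s9, s10, s11, s12, s13, s14, s15, s16, s17, s18, s19, s20, s21, s22, s23, s24, s25, s26, s27, s28, s29, s30, s31, s32, s33, s34, s35, s36, s37, s38, s39, s40, s41, s42, s43, s44, s45, s46, s47, s48, s49, s50, s51, s52, s53, s54, s55, s56, s57, s58, s59, s60, s61, s62, s63, s64, s65, s66, s67, s68, s69, s70, s71, s72, s73, s74, s75, s76, s77, s78, s79, s80, s81, s82, s83, s84, s85, s86, s87, s88, s89, s90, s91, s92, s93]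
    simp only [smul_zero, add_zero, zero_add]
  have keyK : ((36 : ℤ) : K) • ((((a * b) * c + (b * c) * a + (c * a) * b) * d) * e) = 0 := by
    rw [Int.cast_smul_eq_zsmul]; exact zer
  have h36 : ((36 : ℤ) : K) ≠ 0 := by norm_num
  calc (((a * b) * c + (b * c) * a + (c * a) * b) * d) * e
      = (((36 : ℤ) : K)⁻¹ * ((36 : ℤ) : K)) • ((((a * b) * c + (b * c) * a + (c * a) * b) * d) * e) := by
        rw [inv_mul_cancel₀ h36, one_smul]
    _ = 0 := by rw [mul_smul, keyK, smul_zero]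
end

section
/- Let A be an algebra of the variety V with anticommutator {a,b} = ab + ba. Then A^(+) is a Jordan algebra: {a,b} = {b,a} and {{a,a},{b,a}} = {{{a,a},b},a} for all a,b. -/
/-- Context: A is a (not necessarily associative, not necessarily unital) algebra over a
field K of characteristic 0, satisfying the defining identities of the variety V. -/

theorem anticommutator_jordan {K A : Type*} [Field K] [CharZero K]
    [NonUnitalNonAssocRing A] [Module K A] [SMulCommClass K A A] [IsScalarTower K A A]
    (h1 : ∀ a b c : A, ((a*b)*c - a*(b*c)) + ((a*c)*b - a*(c*b)) = 0)
    (h2 : ∀ a b c : A, ((a*b)*c - a*(b*c)) + ((b*a)*c - b*(a*c)) = 0)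
    (h3 : ∀ a b c : A, (a*b)*c + (c*b)*a = (a*c)*b + (c*a)*b) :
    (∀ a b : A, a*b + b*a = b*a + a*b) ∧
    ∀ a b : A,
      (let p := fun a b : A => a*b + b*a;
      p (p a a) (p b a) = p (p (p a a) b) a) := by
  refine ⟨fun a b => add_comm _ _, fun a b => ?_⟩
  have e9 : a * (((a*a)*b - a*(a*b)) + ((a*b)*a - a*(b*a))) = 0 := by
    rw [h1 a a b, mul_zero]
  simp only
  linear_combination (norm := (simp only [mul_add, add_mul, mul_sub, sub_mul]; abel1))
    - h1 a a (a*b) - h1 a a (a*b) + h2 a a (a*b) + h2 a a (a*b)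
    - h3 a a (a*b) - h3 a a (a*b) + h2 a a (b*a)
    + h1 a b (a*a) + h1 a b (a*a) - h3 a b (a*a) - h3 a b (a*a)
    - h2 a (a*a) b - h2 a (a*a) b - h3 a (a*a) b - h3 a (a*a) b
    - e9 - e9
end

section
/- Let A be an algebra of the variety V with anticommutator {a,b} = ab + ba. Then A^(+) satisfies {{a,b},{c,d}} = {{a,d},{b,c}} for all a,b,c,d in A. -/
/-- Context: A is a (not necessarily associative, not necessarily unital) algebra over a
field K of characteristic 0, satisfying the defining identities of the variety V. -/

theorem anticommutator_perm_id {K A : Type*} [Field K] [CharZero K]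
    [NonUnitalNonAssocRing A] [Module K A] [SMulCommClass K A A] [IsScalarTower K A A]
    (h1 : ∀ a b c : A, ((a*b)*c - a*(b*c)) + ((a*c)*b - a*(c*b)) = 0)
    (h2 : ∀ a b c : A, ((a*b)*c - a*(b*c)) + ((b*a)*c - b*(a*c)) = 0)
    (h3 : ∀ a b c : A, (a*b)*c + (c*b)*a = (a*c)*b + (c*a)*b) :
    ∀ a b c d : A,
      (let p := fun a b : A => a*b + b*a;
      p (p a b) (p c d) = p (p a d) (p b c)) := by
  intro a b c d
  have h3' : ∀ x y z : A, (x*y)*z + (z*y)*x - ((x*z)*y + (z*x)*y) = 0 :=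
    fun x y z => sub_eq_zero.mpr (h3 x y z)
  show (a*b+b*a)*(c*d+d*c) + (c*d+d*c)*(a*b+b*a) = (a*d+d*a)*(b*c+c*b) + (b*c+c*b)*(a*d+d*a)
  rw [← sub_eq_zero]
  have key : (3 : ℤ) • ((a*b+b*a)*(c*d+d*c) + (c*d+d*c)*(a*b+b*a) - ((a*d+d*a)*(b*c+c*b) + (b*c+c*b)*(a*d+d*a))) =
      ((1 : ℤ) • ((((a*b)*c)*d - (a*b)*(c*d)) + (((a*b)*d)*c - (a*b)*(d*c)))) +
      ((4 : ℤ) • (((c*(a*b))*d - c*((a*b)*d)) + ((c*d)*(a*b) - c*(d*(a*b))))) +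
      ((3 : ℤ) • (((d*(a*b))*c - d*((a*b)*c)) + ((d*c)*(a*b) - d*(c*(a*b))))) +
      ((2 : ℤ) • ((((a*c)*b)*d - (a*c)*(b*d)) + (((a*c)*d)*b - (a*c)*(d*b)))) +
      ((1 : ℤ) • (((b*(a*c))*d - b*((a*c)*d)) + ((b*d)*(a*c) - b*(d*(a*c))))) +
      ((-1 : ℤ) • (((d*(a*c))*b - d*((a*c)*b)) + ((d*b)*(a*c) - d*(b*(a*c))))) +
      ((1 : ℤ) • ((((a*d)*b)*c - (a*d)*(b*c)) + (((a*d)*c)*b - (a*d)*(c*b)))) +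
      ((-5 : ℤ) • (((b*(a*d))*c - b*((a*d)*c)) + ((b*c)*(a*d) - b*(c*(a*d))))) +
      ((-6 : ℤ) • (((c*(a*d))*b - c*((a*d)*b)) + ((c*b)*(a*d) - c*(b*(a*d))))) +
      ((1 : ℤ) • ((((b*a)*c)*d - (b*a)*(c*d)) + (((b*a)*d)*c - (b*a)*(d*c)))) +
      ((2 : ℤ) • (((c*(b*a))*d - c*((b*a)*d)) + ((c*d)*(b*a) - c*(d*(b*a))))) +
      ((1 : ℤ) • (((d*(b*a))*c - d*((b*a)*c)) + ((d*c)*(b*a) - d*(c*(b*a))))) +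
      ((1 : ℤ) • ((((b*c)*a)*d - (b*c)*(a*d)) + (((b*c)*d)*a - (b*c)*(d*a)))) +
      ((-2 : ℤ) • (((a*(b*c))*d - a*((b*c)*d)) + ((a*d)*(b*c) - a*(d*(b*c))))) +
      ((-3 : ℤ) • (((d*(b*c))*a - d*((b*c)*a)) + ((d*a)*(b*c) - d*(a*(b*c))))) +
      ((-4 : ℤ) • (((a*(b*d))*c - a*((b*d)*c)) + ((a*c)*(b*d) - a*(c*(b*d))))) +
      ((-4 : ℤ) • (((c*(b*d))*a - c*((b*d)*a)) + ((c*a)*(b*d) - c*(a*(b*d))))) +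
      ((2 : ℤ) • ((((c*a)*b)*d - (c*a)*(b*d)) + (((c*a)*d)*b - (c*a)*(d*b)))) +
      ((1 : ℤ) • (((b*(c*a))*d - b*((c*a)*d)) + ((b*d)*(c*a) - b*(d*(c*a))))) +
      ((-1 : ℤ) • (((d*(c*a))*b - d*((c*a)*b)) + ((d*b)*(c*a) - d*(b*(c*a))))) +
      ((1 : ℤ) • ((((c*b)*a)*d - (c*b)*(a*d)) + (((c*b)*d)*a - (c*b)*(d*a)))) +
      ((-1 : ℤ) • (((d*(c*b))*a - d*((c*b)*a)) + ((d*a)*(c*b) - d*(a*(c*b))))) +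
      ((-1 : ℤ) • ((((c*d)*a)*b - (c*d)*(a*b)) + (((c*d)*b)*a - (c*d)*(b*a)))) +
      ((-4 : ℤ) • (((a*(c*d))*b - a*((c*d)*b)) + ((a*b)*(c*d) - a*(b*(c*d))))) +
      ((-3 : ℤ) • (((b*(c*d))*a - b*((c*d)*a)) + ((b*a)*(c*d) - b*(a*(c*d))))) +
      ((1 : ℤ) • ((((d*a)*b)*c - (d*a)*(b*c)) + (((d*a)*c)*b - (d*a)*(c*b)))) +
      ((-3 : ℤ) • (((b*(d*a))*c - b*((d*a)*c)) + ((b*c)*(d*a) - b*(c*(d*a))))) +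
      ((-4 : ℤ) • (((c*(d*a))*b - c*((d*a)*b)) + ((c*b)*(d*a) - c*(b*(d*a))))) +
      ((-1 : ℤ) • ((((d*c)*a)*b - (d*c)*(a*b)) + (((d*c)*b)*a - (d*c)*(b*a)))) +
      ((-2 : ℤ) • (((a*(d*c))*b - a*((d*c)*b)) + ((a*b)*(d*c) - a*(b*(d*c))))) +
      ((-1 : ℤ) • (((b*(d*c))*a - b*((d*c)*a)) + ((b*a)*(d*c) - b*(a*(d*c))))) +
      ((-2 : ℤ) • ((((a*b)*c)*d - (a*b)*(c*d)) + ((c*(a*b))*d - c*((a*b)*d)))) +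
      ((-2 : ℤ) • (((c*d)*(a*b) - c*(d*(a*b))) + ((d*c)*(a*b) - d*(c*(a*b))))) +
      ((-4 : ℤ) • ((((a*c)*b)*d - (a*c)*(b*d)) + ((b*(a*c))*d - b*((a*c)*d)))) +
      ((2 : ℤ) • (((b*d)*(a*c) - b*(d*(a*c))) + ((d*b)*(a*c) - d*(b*(a*c))))) +
      ((-2 : ℤ) • ((((a*d)*b)*c - (a*d)*(b*c)) + ((b*(a*d))*c - b*((a*d)*c)))) +
      ((8 : ℤ) • (((b*c)*(a*d) - b*(c*(a*d))) + ((c*b)*(a*d) - c*(b*(a*d))))) +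
      ((-2 : ℤ) • ((((b*a)*c)*d - (b*a)*(c*d)) + ((c*(b*a))*d - c*((b*a)*d)))) +
      ((-2 : ℤ) • ((((b*c)*a)*d - (b*c)*(a*d)) + ((a*(b*c))*d - a*((b*c)*d)))) +
      ((2 : ℤ) • (((a*d)*(b*c) - a*(d*(b*c))) + ((d*a)*(b*c) - d*(a*(b*c))))) +
      ((6 : ℤ) • (((a*c)*(b*d) - a*(c*(b*d))) + ((c*a)*(b*d) - c*(a*(b*d))))) +
      ((-4 : ℤ) • ((((c*a)*b)*d - (c*a)*(b*d)) + ((b*(c*a))*d - b*((c*a)*d)))) +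
      ((2 : ℤ) • (((b*d)*(c*a) - b*(d*(c*a))) + ((d*b)*(c*a) - d*(b*(c*a))))) +
      ((-2 : ℤ) • ((((c*b)*a)*d - (c*b)*(a*d)) + ((a*(c*b))*d - a*((c*b)*d)))) +
      ((2 : ℤ) • ((((c*d)*a)*b - (c*d)*(a*b)) + ((a*(c*d))*b - a*((c*d)*b)))) +
      ((8 : ℤ) • (((a*b)*(c*d) - a*(b*(c*d))) + ((b*a)*(c*d) - b*(a*(c*d))))) +
      ((-2 : ℤ) • ((((d*a)*b)*c - (d*a)*(b*c)) + ((b*(d*a))*c - b*((d*a)*c)))) +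
      ((6 : ℤ) • (((b*c)*(d*a) - b*(c*(d*a))) + ((c*b)*(d*a) - c*(b*(d*a))))) +
      ((2 : ℤ) • (((a*c)*(d*b) - a*(c*(d*b))) + ((c*a)*(d*b) - c*(a*(d*b))))) +
      ((2 : ℤ) • ((((d*c)*a)*b - (d*c)*(a*b)) + ((a*(d*c))*b - a*((d*c)*b)))) +
      ((6 : ℤ) • (((a*b)*(d*c) - a*(b*(d*c))) + ((b*a)*(d*c) - b*(a*(d*c))))) +
      ((1 : ℤ) • ((((a*b)*c)*d + (d*c)*(a*b) - (((a*b)*d)*c + (d*(a*b))*c)))) +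
      ((-2 : ℤ) • (((c*(a*b))*d + (d*(a*b))*c - ((c*d)*(a*b) + (d*c)*(a*b))))) +
      ((2 : ℤ) • ((((a*c)*b)*d + (d*b)*(a*c) - (((a*c)*d)*b + (d*(a*c))*b)))) +
      ((3 : ℤ) • (((b*(a*c))*d + (d*(a*c))*b - ((b*d)*(a*c) + (d*b)*(a*c))))) +
      ((1 : ℤ) • ((((a*d)*b)*c + (c*b)*(a*d) - (((a*d)*c)*b + (c*(a*d))*b)))) +
      ((7 : ℤ) • (((b*(a*d))*c + (c*(a*d))*b - ((b*c)*(a*d) + (c*b)*(a*d))))) +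
      ((1 : ℤ) • ((((b*a)*c)*d + (d*c)*(b*a) - (((b*a)*d)*c + (d*(b*a))*c)))) +
      ((1 : ℤ) • ((((b*c)*a)*d + (d*a)*(b*c) - (((b*c)*d)*a + (d*(b*c))*a)))) +
      ((4 : ℤ) • (((a*(b*c))*d + (d*(b*c))*a - ((a*d)*(b*c) + (d*a)*(b*c))))) +
      ((4 : ℤ) • (((a*(b*d))*c + (c*(b*d))*a - ((a*c)*(b*d) + (c*a)*(b*d))))) +
      ((2 : ℤ) • ((((c*a)*b)*d + (d*b)*(c*a) - (((c*a)*d)*b + (d*(c*a))*b)))) +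
      ((3 : ℤ) • (((b*(c*a))*d + (d*(c*a))*b - ((b*d)*(c*a) + (d*b)*(c*a))))) +
      ((1 : ℤ) • ((((c*b)*a)*d + (d*a)*(c*b) - (((c*b)*d)*a + (d*(c*b))*a)))) +
      ((2 : ℤ) • (((a*(c*b))*d + (d*(c*b))*a - ((a*d)*(c*b) + (d*a)*(c*b))))) +
      ((-1 : ℤ) • ((((c*d)*a)*b + (b*a)*(c*d) - (((c*d)*b)*a + (b*(c*d))*a)))) +
      ((2 : ℤ) • (((a*(c*d))*b + (b*(c*d))*a - ((a*b)*(c*d) + (b*a)*(c*d))))) +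
      ((1 : ℤ) • ((((d*a)*b)*c + (c*b)*(d*a) - (((d*a)*c)*b + (c*(d*a))*b)))) +
      ((5 : ℤ) • (((b*(d*a))*c + (c*(d*a))*b - ((b*c)*(d*a) + (c*b)*(d*a))))) +
      ((-1 : ℤ) • ((((d*c)*a)*b + (b*a)*(d*c) - (((d*c)*b)*a + (b*(d*c))*a)))) +
      ((1 : ℤ) • (d * (((a*b)*c - a*(b*c)) + ((a*c)*b - a*(c*b))))) +
      ((-2 : ℤ) • (c * (((a*b)*d - a*(b*d)) + ((a*d)*b - a*(d*b))))) +
      ((-5 : ℤ) • (b * (((a*c)*d - a*(c*d)) + ((a*d)*c - a*(d*c))))) +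
      ((-1 : ℤ) • (d * (((b*a)*c - b*(a*c)) + ((b*c)*a - b*(c*a))))) +
      ((-2 : ℤ) • (c * (((b*a)*d - b*(a*d)) + ((b*d)*a - b*(d*a))))) +
      ((-4 : ℤ) • (a * (((b*c)*d - b*(c*d)) + ((b*d)*c - b*(d*c))))) +
      ((-1 : ℤ) • (d * (((c*a)*b - c*(a*b)) + ((c*b)*a - c*(b*a))))) +
      ((-3 : ℤ) • (b * (((c*a)*d - c*(a*d)) + ((c*d)*a - c*(d*a))))) +
      ((-2 : ℤ) • (a * (((c*b)*d - c*(b*d)) + ((c*d)*b - c*(d*b))))) +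
      ((-2 : ℤ) • (c * (((d*a)*b - d*(a*b)) + ((d*b)*a - d*(b*a))))) +
      ((-3 : ℤ) • (b * (((d*a)*c - d*(a*c)) + ((d*c)*a - d*(c*a))))) +
      ((2 : ℤ) • (c * ((a*b)*d + (d*b)*a - ((a*d)*b + (d*a)*b)))) +
      ((-2 : ℤ) • (d * ((a*c)*b + (b*c)*a - ((a*b)*c + (b*a)*c)))) +
      ((2 : ℤ) • (b * ((a*c)*d + (d*c)*a - ((a*d)*c + (d*a)*c)))) +
      ((-2 : ℤ) • (c * ((a*d)*b + (b*d)*a - ((a*b)*d + (b*a)*d)))) := by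
    simp only [mul_add, add_mul, mul_sub, sub_mul]
    abel
  have key0 : (3 : ℤ) • ((a*b+b*a)*(c*d+d*c) + (c*d+d*c)*(a*b+b*a) - ((a*d+d*a)*(b*c+c*b) + (b*c+c*b)*(a*d+d*a))) = 0 := by
    rw [key]
    simp only [h1, h2, h3', mul_zero, zero_mul, smul_zero, sub_self, add_zero, zero_add]
  rw [← Int.cast_smul_eq_zsmul K] at key0
  exact (smul_eq_zero.mp key0).resolve_left (by norm_num)
end

section
/- Every perm algebra satisfies the identity {{a,b},{c,d}} = {{a,d},{b,c}} where {a,b} = ab + ba. -/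
/-- Every perm algebra (associative with (ab)c = (ac)b) over a field of characteristic 0
satisfies {{a,b},{c,d}} = {{a,d},{b,c}} where {a,b} = ab + ba. -/
theorem perm_anticommutator_identity {K A : Type*} [Field K] [CharZero K]
    [NonUnitalRing A] [Module K A] [SMulCommClass K A A] [IsScalarTower K A A]
    (hperm : ∀ a b c : A, (a*b)*c = (a*c)*b) :
    ∀ a b c d : A,
      (let p := fun x y : A => x*y + y*x;
      p (p a b) (p c d) = p (p a d) (p b c)) := by
  intro a b c d
  have h1 : ∀ x y z w : A, x*y*z*w = x*z*y*w := fun x y z w => by rw [hperm x y z]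
  -- canonical forms: a*b*c*d, b*a*c*d, c*a*b*d, d*a*b*c
  have e1 : a*b*d*c = a*b*c*d := (hperm (a*b) d c).symm ▸ rfl
  have e2 : b*a*d*c = b*a*c*d := (hperm (b*a) d c).symm ▸ rfl
  have e3 : c*d*a*b = c*a*b*d := by rw [h1 c d a b, hperm (c*a) d b]
  have e4 : d*c*a*b = d*a*b*c := by rw [h1 d c a b, hperm (d*a) c b]
  have e5 : c*d*b*a = c*a*b*d := by rw [h1 c d b a, hperm (c*b) d a, h1 c b a d]
  have e6 : d*c*b*a = d*a*b*c := by rw [h1 d c b a, hperm (d*b) c a, h1 d b a c]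
  have e7 : a*d*b*c = a*b*c*d := by rw [h1 a d b c, hperm (a*b) d c]
  have e8 : a*d*c*b = a*b*c*d := by rw [h1 a d c b, hperm (a*c) d b, h1 a c b d]
  have e9 : d*a*c*b = d*a*b*c := hperm (d*a) c b
  have e10 : b*c*a*d = b*a*c*d := h1 b c a d
  have e11 : c*b*a*d = c*a*b*d := h1 c b a d
  have e12 : b*c*d*a = b*a*c*d := by rw [hperm (b*c) d a, h1 b c a d]
  have e13 : c*b*d*a = c*a*b*d := by rw [hperm (c*b) d a, h1 c b a d]
  simp only [mul_add, add_mul, ← mul_assoc]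
  rw [e1, e2, e3, e4, e5, e6, e7, e8, e9, e10, e11, e12, e13]
  abel
end

section
/- Let A be an algebra of the variety V with commutator [a,b] = ab - ba. Then A^(-) is a Malcev algebra: it is anticommutative and satisfies [[a,c],[a,b]] = [[[a,b],c],a] + [[[b,c],a],a] + [[[c,a],a],b] for all a,b,c in A. -/
/-- Context: A is a (not necessarily associative, not necessarily unital) algebra over a
field K of characteristic 0, satisfying the defining identities of the variety V. -/

theorem commutator_malcev {K A : Type*} [Field K] [CharZero K]
    [NonUnitalNonAssocRing A] [Module K A] [SMulCommClass K A A] [IsScalarTower K A A]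
    (h1 : ∀ a b c : A, ((a*b)*c - a*(b*c)) + ((a*c)*b - a*(c*b)) = 0)
    (h2 : ∀ a b c : A, ((a*b)*c - a*(b*c)) + ((b*a)*c - b*(a*c)) = 0)
    (h3 : ∀ a b c : A, (a*b)*c + (c*b)*a = (a*c)*b + (c*a)*b) :
    (∀ a b : A, (a*b - b*a) = -(b*a - a*b)) ∧
    ∀ a b c : A,
      (let lb := fun a b : A => a*b - b*a;
      lb (lb a c) (lb a b) =
        lb (lb (lb a b) c) a + lb (lb (lb b c) a) a + lb (lb (lb c a) a) b) := by
  refine ⟨fun a b => by abel, fun a b c => ?_⟩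
  show ((a * c - c * a) * (a * b - b * a) - (a * b - b * a) * (a * c - c * a)) = (((a * b - b * a) * c - c * (a * b - b * a)) * a - a * ((a * b - b * a) * c - c * (a * b - b * a))) + (((b * c - c * b) * a - a * (b * c - c * b)) * a - a * ((b * c - c * b) * a - a * (b * c - c * b))) + (((c * a - a * c) * a - a * (c * a - a * c)) * b - b * ((c * a - a * c) * a - a * (c * a - a * c)))
  have e0 : ((((a * a) * b) * c - (a * a) * (b * c)) + (((a * a) * c) * b - (a * a) * (c * b))) = 0 := h1 (a * a) b c
  have e1 : ((((a * b) * a) * c - (a * b) * (a * c)) + (((a * b) * c) * a - (a * b) * (c * a))) = 0 := h1 (a * b) a c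
  have e2 : ((((a * c) * a) * b - (a * c) * (a * b)) + (((a * c) * b) * a - (a * c) * (b * a))) = 0 := h1 (a * c) a b
  have e3 : ((((b * a) * a) * c - (b * a) * (a * c)) + (((b * a) * c) * a - (b * a) * (c * a))) = 0 := h1 (b * a) a c
  have e4 : ((((b * c) * a) * a - (b * c) * (a * a)) + (((b * c) * a) * a - (b * c) * (a * a))) = 0 := h1 (b * c) a a
  have e5 : ((((c * a) * a) * b - (c * a) * (a * b)) + (((c * a) * b) * a - (c * a) * (b * a))) = 0 := h1 (c * a) a b
  have e6 : ((((c * b) * a) * a - (c * b) * (a * a)) + (((c * b) * a) * a - (c * b) * (a * a))) = 0 := h1 (c * b) a a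
  have e7 : (((a * (a * b)) * c - a * ((a * b) * c)) + ((a * c) * (a * b) - a * (c * (a * b)))) = 0 := h1 a (a * b) c
  have e8 : (((a * (b * a)) * c - a * ((b * a) * c)) + ((a * c) * (b * a) - a * (c * (b * a)))) = 0 := h1 a (b * a) c
  have e9 : (((a * (b * c)) * a - a * ((b * c) * a)) + ((a * a) * (b * c) - a * (a * (b * c)))) = 0 := h1 a (b * c) a
  have e10 : (((a * (c * b)) * a - a * ((c * b) * a)) + ((a * a) * (c * b) - a * (a * (c * b)))) = 0 := h1 a (c * b) a
  have e11 : (((b * (a * c)) * a - b * ((a * c) * a)) + ((b * a) * (a * c) - b * (a * (a * c)))) = 0 := h1 b (a * c) a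
  have e12 : (((b * (c * a)) * a - b * ((c * a) * a)) + ((b * a) * (c * a) - b * (a * (c * a)))) = 0 := h1 b (c * a) a
  have e13 : (((c * (a * a)) * b - c * ((a * a) * b)) + ((c * b) * (a * a) - c * (b * (a * a)))) = 0 := h1 c (a * a) b
  have e14 : (((c * (a * b)) * a - c * ((a * b) * a)) + ((c * a) * (a * b) - c * (a * (a * b)))) = 0 := h1 c (a * b) a
  have e15 : (((c * (b * a)) * a - c * ((b * a) * a)) + ((c * a) * (b * a) - c * (a * (b * a)))) = 0 := h1 c (b * a) a
  have e16 : ((((a * a) * c) * b - (a * a) * (c * b)) + ((c * (a * a)) * b - c * ((a * a) * b))) = 0 := h2 (a * a) c b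
  have e17 : ((((a * b) * a) * c - (a * b) * (a * c)) + ((a * (a * b)) * c - a * ((a * b) * c))) = 0 := h2 (a * b) a c
  have e18 : ((((a * b) * c) * a - (a * b) * (c * a)) + ((c * (a * b)) * a - c * ((a * b) * a))) = 0 := h2 (a * b) c a
  have e19 : ((((a * c) * b) * a - (a * c) * (b * a)) + ((b * (a * c)) * a - b * ((a * c) * a))) = 0 := h2 (a * c) b a
  have e20 : ((((b * a) * a) * c - (b * a) * (a * c)) + ((a * (b * a)) * c - a * ((b * a) * c))) = 0 := h2 (b * a) a c
  have e21 : ((((b * a) * c) * a - (b * a) * (c * a)) + ((c * (b * a)) * a - c * ((b * a) * a))) = 0 := h2 (b * a) c a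
  have e22 : ((((b * c) * a) * a - (b * c) * (a * a)) + ((a * (b * c)) * a - a * ((b * c) * a))) = 0 := h2 (b * c) a a
  have e23 : ((((c * a) * b) * a - (c * a) * (b * a)) + ((b * (c * a)) * a - b * ((c * a) * a))) = 0 := h2 (c * a) b a
  have e24 : ((((c * b) * a) * a - (c * b) * (a * a)) + ((a * (c * b)) * a - a * ((c * b) * a))) = 0 := h2 (c * b) a a
  have e25 : ((((a * a) * b) * c + (c * b) * (a * a)) - (((a * a) * c) * b + (c * (a * a)) * b)) = 0 := sub_eq_zero_of_eq (h3 (a * a) b c)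
  have e26 : ((((a * a) * c) * b + (b * c) * (a * a)) - (((a * a) * b) * c + (b * (a * a)) * c)) = 0 := sub_eq_zero_of_eq (h3 (a * a) c b)
  have e27 : ((((a * b) * a) * c + (c * a) * (a * b)) - (((a * b) * c) * a + (c * (a * b)) * a)) = 0 := sub_eq_zero_of_eq (h3 (a * b) a c)
  have e28 : ((((a * b) * c) * a + (a * c) * (a * b)) - (((a * b) * a) * c + (a * (a * b)) * c)) = 0 := sub_eq_zero_of_eq (h3 (a * b) c a)
  have e29 : ((((a * c) * a) * b + (b * a) * (a * c)) - (((a * c) * b) * a + (b * (a * c)) * a)) = 0 := sub_eq_zero_of_eq (h3 (a * c) a b)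
  have e30 : ((((a * c) * b) * a + (a * b) * (a * c)) - (((a * c) * a) * b + (a * (a * c)) * b)) = 0 := sub_eq_zero_of_eq (h3 (a * c) b a)
  have e31 : ((((b * a) * a) * c + (c * a) * (b * a)) - (((b * a) * c) * a + (c * (b * a)) * a)) = 0 := sub_eq_zero_of_eq (h3 (b * a) a c)
  have e32 : ((((b * a) * c) * a + (a * c) * (b * a)) - (((b * a) * a) * c + (a * (b * a)) * c)) = 0 := sub_eq_zero_of_eq (h3 (b * a) c a)
  have e33 : ((((b * c) * a) * a + (a * a) * (b * c)) - (((b * c) * a) * a + (a * (b * c)) * a)) = 0 := sub_eq_zero_of_eq (h3 (b * c) a a)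
  have e34 : ((((c * a) * a) * b + (b * a) * (c * a)) - (((c * a) * b) * a + (b * (c * a)) * a)) = 0 := sub_eq_zero_of_eq (h3 (c * a) a b)
  have e35 : ((((c * a) * b) * a + (a * b) * (c * a)) - (((c * a) * a) * b + (a * (c * a)) * b)) = 0 := sub_eq_zero_of_eq (h3 (c * a) b a)
  have e36 : ((((c * b) * a) * a + (a * a) * (c * b)) - (((c * b) * a) * a + (a * (c * b)) * a)) = 0 := sub_eq_zero_of_eq (h3 (c * b) a a)
  have e37 : ((((a * a) * b - a * (a * b)) + ((a * b) * a - a * (b * a))) * c) = 0 := by rw [h1 a a b, zero_mul]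
  have e38 : (c * (((a * a) * b - a * (a * b)) + ((a * b) * a - a * (b * a)))) = 0 := by rw [h1 a a b, mul_zero]
  have e39 : ((((a * b) * c - a * (b * c)) + ((a * c) * b - a * (c * b))) * a) = 0 := by rw [h1 a b c, zero_mul]
  have e40 : ((((b * a) * a - b * (a * a)) + ((b * a) * a - b * (a * a))) * c) = 0 := by rw [h1 b a a, zero_mul]
  have e41 : (c * (((b * a) * a - b * (a * a)) + ((b * a) * a - b * (a * a)))) = 0 := by rw [h1 b a a, mul_zero]
  have e42 : ((((c * a) * a - c * (a * a)) + ((c * a) * a - c * (a * a))) * b) = 0 := by rw [h1 c a a, zero_mul]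
  have e43 : (c * (((a * a) * b - a * (a * b)) + ((a * a) * b - a * (a * b)))) = 0 := by rw [h2 a a b, mul_zero]
  have f44 : (((a * a) * b + (b * a) * a) - ((a * b) * a + (b * a) * a)) = 0 := sub_eq_zero_of_eq (h3 a a b)
  have e44 : ((((a * a) * b + (b * a) * a) - ((a * b) * a + (b * a) * a)) * c) = 0 := by rw [f44, zero_mul]
  have f45 : (((a * a) * b + (b * a) * a) - ((a * b) * a + (b * a) * a)) = 0 := sub_eq_zero_of_eq (h3 a a b)
  have e45 : (c * (((a * a) * b + (b * a) * a) - ((a * b) * a + (b * a) * a))) = 0 := by rw [f45, mul_zero]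
  have key : (2 : ℤ) • ((((a * c - c * a) * (a * b - b * a) - (a * b - b * a) * (a * c - c * a))) - ((((a * b - b * a) * c - c * (a * b - b * a)) * a - a * ((a * b - b * a) * c - c * (a * b - b * a))) + (((b * c - c * b) * a - a * (b * c - c * b)) * a - a * ((b * c - c * b) * a - a * (b * c - c * b))) + (((c * a - a * c) * a - a * (c * a - a * c)) * b - b * ((c * a - a * c) * a - a * (c * a - a * c))))) =
      ((4 : ℤ) • ((((a * a) * b) * c - (a * a) * (b * c)) + (((a * a) * c) * b - (a * a) * (c * b)))) +
      ((8 : ℤ) • ((((a * b) * a) * c - (a * b) * (a * c)) + (((a * b) * c) * a - (a * b) * (c * a)))) +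
      ((2 : ℤ) • ((((a * c) * a) * b - (a * c) * (a * b)) + (((a * c) * b) * a - (a * c) * (b * a)))) +
      ((-6 : ℤ) • ((((b * a) * a) * c - (b * a) * (a * c)) + (((b * a) * c) * a - (b * a) * (c * a)))) +
      ((1 : ℤ) • ((((b * c) * a) * a - (b * c) * (a * a)) + (((b * c) * a) * a - (b * c) * (a * a)))) +
      ((4 : ℤ) • ((((c * a) * a) * b - (c * a) * (a * b)) + (((c * a) * b) * a - (c * a) * (b * a)))) +
      ((-1 : ℤ) • ((((c * b) * a) * a - (c * b) * (a * a)) + (((c * b) * a) * a - (c * b) * (a * a)))) +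
      ((2 : ℤ) • (((a * (a * b)) * c - a * ((a * b) * c)) + ((a * c) * (a * b) - a * (c * (a * b))))) +
      ((-2 : ℤ) • (((a * (b * a)) * c - a * ((b * a) * c)) + ((a * c) * (b * a) - a * (c * (b * a))))) +
      ((2 : ℤ) • (((a * (b * c)) * a - a * ((b * c) * a)) + ((a * a) * (b * c) - a * (a * (b * c))))) +
      ((-2 : ℤ) • (((a * (c * b)) * a - a * ((c * b) * a)) + ((a * a) * (c * b) - a * (a * (c * b))))) +
      ((-2 : ℤ) • (((b * (a * c)) * a - b * ((a * c) * a)) + ((b * a) * (a * c) - b * (a * (a * c))))) +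
      ((2 : ℤ) • (((b * (c * a)) * a - b * ((c * a) * a)) + ((b * a) * (c * a) - b * (a * (c * a))))) +
      ((-4 : ℤ) • (((c * (a * a)) * b - c * ((a * a) * b)) + ((c * b) * (a * a) - c * (b * (a * a))))) +
      ((8 : ℤ) • (((c * (a * b)) * a - c * ((a * b) * a)) + ((c * a) * (a * b) - c * (a * (a * b))))) +
      ((-4 : ℤ) • (((c * (b * a)) * a - c * ((b * a) * a)) + ((c * a) * (b * a) - c * (a * (b * a))))) +
      ((4 : ℤ) • ((((a * a) * c) * b - (a * a) * (c * b)) + ((c * (a * a)) * b - c * ((a * a) * b)))) +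
      ((-4 : ℤ) • ((((a * b) * a) * c - (a * b) * (a * c)) + ((a * (a * b)) * c - a * ((a * b) * c)))) +
      ((-12 : ℤ) • ((((a * b) * c) * a - (a * b) * (c * a)) + ((c * (a * b)) * a - c * ((a * b) * a)))) +
      ((4 : ℤ) • ((((a * c) * b) * a - (a * c) * (b * a)) + ((b * (a * c)) * a - b * ((a * c) * a)))) +
      ((4 : ℤ) • ((((b * a) * a) * c - (b * a) * (a * c)) + ((a * (b * a)) * c - a * ((b * a) * c)))) +
      ((8 : ℤ) • ((((b * a) * c) * a - (b * a) * (c * a)) + ((c * (b * a)) * a - c * ((b * a) * a)))) +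
      ((-4 : ℤ) • ((((b * c) * a) * a - (b * c) * (a * a)) + ((a * (b * c)) * a - a * ((b * c) * a)))) +
      ((-4 : ℤ) • ((((c * a) * b) * a - (c * a) * (b * a)) + ((b * (c * a)) * a - b * ((c * a) * a)))) +
      ((4 : ℤ) • ((((c * b) * a) * a - (c * b) * (a * a)) + ((a * (c * b)) * a - a * ((c * b) * a)))) +
      ((6 : ℤ) • ((((a * a) * b) * c + (c * b) * (a * a)) - (((a * a) * c) * b + (c * (a * a)) * b))) +
      ((-2 : ℤ) • ((((a * a) * c) * b + (b * c) * (a * a)) - (((a * a) * b) * c + (b * (a * a)) * c))) +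
      ((-6 : ℤ) • ((((a * b) * a) * c + (c * a) * (a * b)) - (((a * b) * c) * a + (c * (a * b)) * a))) +
      ((2 : ℤ) • ((((a * b) * c) * a + (a * c) * (a * b)) - (((a * b) * a) * c + (a * (a * b)) * c))) +
      ((2 : ℤ) • ((((a * c) * a) * b + (b * a) * (a * c)) - (((a * c) * b) * a + (b * (a * c)) * a))) +
      ((2 : ℤ) • ((((a * c) * b) * a + (a * b) * (a * c)) - (((a * c) * a) * b + (a * (a * c)) * b))) +
      ((6 : ℤ) • ((((b * a) * a) * c + (c * a) * (b * a)) - (((b * a) * c) * a + (c * (b * a)) * a))) +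
      ((6 : ℤ) • ((((b * a) * c) * a + (a * c) * (b * a)) - (((b * a) * a) * c + (a * (b * a)) * c))) +
      ((2 : ℤ) • ((((b * c) * a) * a + (a * a) * (b * c)) - (((b * c) * a) * a + (a * (b * c)) * a))) +
      ((-2 : ℤ) • ((((c * a) * a) * b + (b * a) * (c * a)) - (((c * a) * b) * a + (b * (c * a)) * a))) +
      ((-2 : ℤ) • ((((c * a) * b) * a + (a * b) * (c * a)) - (((c * a) * a) * b + (a * (c * a)) * b))) +
      ((10 : ℤ) • ((((c * b) * a) * a + (a * a) * (c * b)) - (((c * b) * a) * a + (a * (c * b)) * a))) +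
      ((-4 : ℤ) • ((((a * a) * b - a * (a * b)) + ((a * b) * a - a * (b * a))) * c)) +
      ((4 : ℤ) • (c * (((a * a) * b - a * (a * b)) + ((a * b) * a - a * (b * a))))) +
      ((-6 : ℤ) • ((((a * b) * c - a * (b * c)) + ((a * c) * b - a * (c * b))) * a)) +
      ((1 : ℤ) • ((((b * a) * a - b * (a * a)) + ((b * a) * a - b * (a * a))) * c)) +
      ((2 : ℤ) • (c * (((b * a) * a - b * (a * a)) + ((b * a) * a - b * (a * a))))) +
      ((-3 : ℤ) • ((((c * a) * a - c * (a * a)) + ((c * a) * a - c * (a * a))) * b)) +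
      ((-6 : ℤ) • (c * (((a * a) * b - a * (a * b)) + ((a * a) * b - a * (a * b))))) +
      ((-8 : ℤ) • ((((a * a) * b + (b * a) * a) - ((a * b) * a + (b * a) * a)) * c)) +
      ((8 : ℤ) • (c * (((a * a) * b + (b * a) * a) - ((a * b) * a + (b * a) * a)))) := by
    simp only [mul_sub, sub_mul, mul_add, add_mul]
    abel
  rw [e0, e1, e2, e3, e4, e5, e6, e7, e8, e9, e10, e11, e12, e13, e14, e15, e16, e17, e18, e19, e20, e21, e22, e23, e24, e25, e26, e27, e28, e29, e30, e31, e32, e33, e34, e35, e36, e37, e38, e39, e40, e41, e42, e43, e44, e45] at key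
  simp only [smul_zero, add_zero] at key
  have k2 : ((2 : ℤ) : K) • ((((a * c - c * a) * (a * b - b * a) - (a * b - b * a) * (a * c - c * a))) - ((((a * b - b * a) * c - c * (a * b - b * a)) * a - a * ((a * b - b * a) * c - c * (a * b - b * a))) + (((b * c - c * b) * a - a * (b * c - c * b)) * a - a * ((b * c - c * b) * a - a * (b * c - c * b))) + (((c * a - a * c) * a - a * (c * a - a * c)) * b - b * ((c * a - a * c) * a - a * (c * a - a * c))))) = 0 := by
    rw [Int.cast_smul_eq_zsmul]; exact key
  have := (smul_eq_zero.mp k2).resolve_left (by norm_num)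
  exact sub_eq_zero.mp (by linear_combination (norm := abel) this)
end
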